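/- arXiv:1103.1099 — 11 statements merged into one kernel-verified Lean document; each statement's English description precedes it below -/
import Mathlib

section
/- Let G be a completely metrizable topological group and let κ be a cardinal with 1 ≤ κ ≤ ℵ₀. Then the set G_κ of κ-tuples of elements of G that freely generate a free subgroup is dense in G^κ (with the product topology) if and only if G_κ is comeagre in G^κ (i.e., G_κ belongs to the residual filter of G^κ). -/
universe u v

/-- The set of `ι`-tuples of elements of `G` that freely generate a free subgroup,
i.e. such that the induced homomorphism `FreeGroup ι →* G` is injective. -/
def freeTuples (G : Type v) [Group G] (ι : Type u) : Set (ι → G) :=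
  {g | Function.Injective (FreeGroup.lift g)}

/-- A topological group `G` is almost `κ`-free if the set of `κ`-tuples of elements of `G`
that freely generate a free subgroup is dense in `G^κ` (with the product topology),
for every (equivalently, some) index type of cardinality `κ`. -/
def AlmostFree (G : Type v) [Group G] [TopologicalSpace G] (κ : Cardinal.{u}) : Prop :=
  ∀ ι : Type u, Cardinal.mk ι = κ → Dense (freeTuples G ι)

/-!
For countable `ι` there are only countably many reduced words, and a tuple is free iff no
nontrivial word evaluates to `1` on it. Evaluating a fixed word is continuous, so `freeTuples G ι`
is a countable intersection of open sets. In the Baire space `G^ι` (a countable product of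
completely metrizable spaces) a `Gδ` set is comeagre exactly when it is dense.
-/

theorem IsGδ.dense_iff_mem_residual {X : Type*} [TopologicalSpace X] [BaireSpace X]
    {s : Set X} (hs : IsGδ s) : Dense s ↔ s ∈ residual X :=
  ⟨residual_of_dense_Gδ hs, dense_of_mem_residual⟩

section FreeTuples

variable {G : Type v} [Group G] {ι : Type u}

theorem continuous_freeGroupLift_apply [TopologicalSpace G] [ContinuousMul G] [ContinuousInv G]
    (w : FreeGroup ι) : Continuous fun g : ι → G => FreeGroup.lift g w := by
  induction w with
  | C1 => simpa only [map_one] using continuous_const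
  | of i => simpa only [FreeGroup.lift_apply_of] using continuous_apply i
  | inv_of i h =>
    simp only [map_inv]
    exact h.inv
  | mul x y hx hy =>
    simp only [map_mul]
    exact hx.mul hy

theorem freeTuples_eq_biInter :
    freeTuples G ι = ⋂ w ∈ ({1}ᶜ : Set (FreeGroup ι)), {g | FreeGroup.lift g w ≠ 1} := by
  ext g
  simp only [freeTuples, injective_iff_map_eq_one, Set.mem_ofPred_eq, Set.mem_iInter,
    Set.mem_compl_singleton_iff]
  exact forall_congr' fun w => not_imp_not.symm

theorem isGδ_freeTuples [TopologicalSpace G] [ContinuousMul G] [ContinuousInv G] [T1Space G]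
    [Countable ι] : IsGδ (freeTuples G ι) := by
  rw [freeTuples_eq_biInter]
  exact .biInter_of_isOpen (Set.to_countable _) fun w _ =>
    isOpen_compl_singleton.preimage (continuous_freeGroupLift_apply w)

end FreeTuples

theorem stmt_0_general {G : Type u} [Group G] [tG : TopologicalSpace G] [IsTopologicalGroup G]
    (hmetr : ∃ m : MetricSpace G, m.toUniformSpace.toTopologicalSpace = tG ∧
      @CompleteSpace G m.toUniformSpace)
    (κ : Cardinal.{u}) (hκ2 : κ ≤ Cardinal.aleph0)
    (ι : Type u) (hι : Cardinal.mk ι = κ) :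
    Dense (freeTuples G ι) ↔ freeTuples G ι ∈ residual (ι → G) := by
  have : Countable ι := Cardinal.mk_le_aleph0_iff.1 (hι ▸ hκ2)
  have : TopologicalSpace.IsCompletelyMetrizableSpace G := ⟨hmetr⟩
  exact isGδ_freeTuples.dense_iff_mem_residual

/-- If `G` is a completely metrizable topological group and `1 ≤ κ ≤ ℵ₀`, then the set of
`κ`-tuples of elements of `G` freely generating a free subgroup is dense in `G^κ` if and
only if it is comeagre in `G^κ`. -/
theorem stmt_0 {G : Type u} [Group G] [tG : TopologicalSpace G] [IsTopologicalGroup G]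
    (hmetr : ∃ m : MetricSpace G, m.toUniformSpace.toTopologicalSpace = tG ∧
      @CompleteSpace G m.toUniformSpace)
    (κ : Cardinal.{u}) (hκ1 : 1 ≤ κ) (hκ2 : κ ≤ Cardinal.aleph0)
    (ι : Type u) (hι : Cardinal.mk ι = κ) :
    Dense (freeTuples G ι) ↔ freeTuples G ι ∈ residual (ι → G) :=
  stmt_0_general (tG := tG) hmetr κ hκ2 ι hι
end

section
/- Let κ > 0 be a cardinal and let G and H be topological groups. Then the direct product G × H (with the product topology) is almost κ-free if and only if at least one of G and H is almost κ-free. -/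
universe u v

universe w

/-!
The two coordinates of a tuple in `G × H` induce homomorphisms on `FreeGroup ι` whose kernels are
normal subgroups meeting in the kernel of the tuple. If that is trivial, the two kernels commute
elementwise; commuting elements of a free group generate a free abelian, hence cyclic, subgroup
(Nielsen–Schreier), and free groups are torsion-free, so one of the kernels is trivial. Thus a
tuple of `G × H` is free iff one of its coordinates is, and the free tuples of `G × H` correspond
to `freeTuples G ι × H^ι ∪ G^ι × freeTuples H ι`, which is dense iff one of its factors is.
-/

open Function Set

theorem FreeGroup.of_mul_of_ne_of_mul_of {α : Type*} {a b : α} (hab : a ≠ b) :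
    of a * of b ≠ of b * of a := by
  classical
  intro h
  have := congrArg (lift fun x => if x = a then Equiv.swap (0 : Fin 3) 1 else Equiv.swap 1 2) h
  simp [hab.symm] at this
  exact absurd this (by decide)

open scoped IsMulCommutative in
theorem IsFreeGroup.isCyclic_of_isMulCommutative (K : Type*) [Group K] [IsFreeGroup K]
    [IsMulCommutative K] : IsCyclic K := by
  let e := IsFreeGroup.toFreeGroup K
  have : Subsingleton (IsFreeGroup.Generators K) := ⟨fun a b => by
    by_contra hab
    apply FreeGroup.of_mul_of_ne_of_mul_of hab
    apply e.symm.injective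
    rw [map_mul, map_mul, mul_comm]⟩
  have : IsCyclic (FreeGroup (IsFreeGroup.Generators K)) := by
    rcases isEmpty_or_nonempty (IsFreeGroup.Generators K) with _ | ⟨⟨a⟩⟩
    · exact isCyclic_of_subsingleton
    · have := uniqueOfSubsingleton a
      infer_instance
  exact isCyclic_of_surjective e.symm e.symm.surjective

namespace FreeGroup

variable {α : Type*}

theorem exists_zpow_eq_of_commute {x y : FreeGroup α} (h : Commute x y) :
    ∃ (z : FreeGroup α) (a b : ℤ), z ^ a = x ∧ z ^ b = y := by
  let K := Subgroup.closure {x, y}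
  have : IsMulCommutative K := Subgroup.isMulCommutative_closure (by
    rintro _ (rfl | rfl) _ (rfl | rfl) <;> first | rfl | exact h | exact h.symm)
  have := IsFreeGroup.isCyclic_of_isMulCommutative K
  obtain ⟨z, hz⟩ := IsCyclic.exists_generator (α := K)
  obtain ⟨a, ha⟩ := Subgroup.mem_zpowers_iff.1 (hz ⟨x, Subgroup.subset_closure (by simp)⟩)
  obtain ⟨b, hb⟩ := Subgroup.mem_zpowers_iff.1 (hz ⟨y, Subgroup.subset_closure (by simp)⟩)
  exact ⟨z, a, b, congrArg Subtype.val ha, congrArg Subtype.val hb⟩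

theorem eq_bot_or_eq_bot_of_disjoint {N M : Subgroup (FreeGroup α)} [N.Normal] [M.Normal]
    (hNM : Disjoint N M) : N = ⊥ ∨ M = ⊥ := by
  by_contra! hne
  obtain ⟨x, hxN, hx⟩ := N.bot_or_exists_ne_one.resolve_left hne.1
  obtain ⟨y, hyM, hy⟩ := M.bot_or_exists_ne_one.resolve_left hne.2
  obtain ⟨z, a, b, rfl, rfl⟩ := exists_zpow_eq_of_commute
    (Subgroup.commute_of_normal_of_disjoint N M ‹_› ‹_› hNM _ _ hxN hyM)
  have hpow : (z ^ a) ^ b = 1 := by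
    refine Subgroup.disjoint_def.1 hNM (zpow_mem hxN b) ?_
    rw [← zpow_mul, mul_comm, zpow_mul]
    exact zpow_mem hyM a
  rcases IsMulTorsionFree.zpow_eq_one_iff.1 hpow with h | rfl
  · exact hx h
  · exact hy (zpow_zero z)

theorem injective_prod_iff {G H : Type*} [Group G] [Group H] (φ : FreeGroup α →* G)
    (ψ : FreeGroup α →* H) : Injective (φ.prod ψ) ↔ Injective φ ∨ Injective ψ := by
  simp only [← MonoidHom.ker_eq_bot_iff, MonoidHom.ker_prod]
  refine ⟨fun h => eq_bot_or_eq_bot_of_disjoint (disjoint_iff.2 h), ?_⟩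
  rintro (h | h) <;> simp [h]

theorem comp_lift {G H : Type*} [Group G] [Group H] (f : G →* H) (g : α → G) :
    f.comp (lift g) = lift (f ∘ g) := by
  ext; simp

end FreeGroup

theorem dense_prod_univ_union_univ_prod_iff {X Y : Type*} [TopologicalSpace X]
    [TopologicalSpace Y] {s : Set X} {t : Set Y} :
    Dense (s ×ˢ univ ∪ univ ×ˢ t) ↔ Dense s ∨ Dense t := by
  simp only [dense_iff_closure_eq, closure_union, closure_prod_eq, closure_univ]
  refine ⟨fun h => ?_, by rintro (h | h) <;> simp [h]⟩
  by_contra! hst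
  obtain ⟨x, hx⟩ := ne_univ_iff_exists_notMem _ |>.1 hst.1
  obtain ⟨y, hy⟩ := ne_univ_iff_exists_notMem _ |>.1 hst.2
  have hxy : (x, y) ∈ closure s ×ˢ univ ∪ univ ×ˢ closure t := h ▸ mem_univ _
  rcases hxy with ⟨hx', -⟩ | ⟨-, hy'⟩
  exacts [hx hx', hy hy']

def Homeomorph.arrowProdEquivProdArrow (ι : Type*) (X Y : ι → Type*)
    [∀ i, TopologicalSpace (X i)] [∀ i, TopologicalSpace (Y i)] :
    (∀ i, X i × Y i) ≃ₜ (∀ i, X i) × (∀ i, Y i) where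
  toEquiv := Equiv.arrowProdEquivProdArrow ι X Y
  continuous_toFun := by dsimp [Equiv.arrowProdEquivProdArrow]; fun_prop
  continuous_invFun := by dsimp [Equiv.arrowProdEquivProdArrow]; fun_prop

section freeTuples

variable {G : Type v} {H : Type w} [Group G] [Group H] {ι ι' : Type u}

theorem comp_equiv_mem_freeTuples_iff (g : ι' → G) (e : ι ≃ ι') :
    g ∘ e ∈ freeTuples G ι ↔ g ∈ freeTuples G ι' := by
  have : FreeGroup.lift (g ∘ e) =
      (FreeGroup.lift g).comp (FreeGroup.freeGroupCongr e).toMonoidHom := by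
    ext; simp
  change Injective (FreeGroup.lift (g ∘ e)) ↔ Injective (FreeGroup.lift g)
  rw [this, MonoidHom.coe_comp, MulEquiv.coe_toMonoidHom, EquivLike.injective_comp]

theorem freeTuples_prod :
    freeTuples (G × H) ι = Equiv.arrowProdEquivProdArrow ι (fun _ => G) (fun _ => H) ⁻¹'
      (freeTuples G ι ×ˢ univ ∪ univ ×ˢ freeTuples H ι) := by
  ext g
  simp only [freeTuples, mem_ofPred_eq, mem_preimage, mem_union, mem_prod, mem_univ, and_true,
    true_and, Equiv.arrowProdEquivProdArrow_apply]
  rw [← MonoidHom.prod_unique (FreeGroup.lift g), FreeGroup.injective_prod_iff,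
    FreeGroup.comp_lift, FreeGroup.comp_lift]
  rfl

variable [TopologicalSpace G] [TopologicalSpace H]

theorem dense_freeTuples_congr (e : ι ≃ ι') :
    Dense (freeTuples G ι) ↔ Dense (freeTuples G ι') := by
  have : freeTuples G ι' =
      (Homeomorph.piCongrLeft (Y := fun _ => G) e).symm ⁻¹' freeTuples G ι := by
    ext g
    exact (comp_equiv_mem_freeTuples_iff g e).symm
  rw [this, (Homeomorph.piCongrLeft e).symm.isOpenQuotientMap.dense_preimage_iff]

theorem almostFree_mk_iff : AlmostFree G (Cardinal.mk ι) ↔ Dense (freeTuples G ι) :=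
  ⟨fun h => h ι rfl, fun h _ hι' => (dense_freeTuples_congr (Cardinal.eq.1 hι').some.symm).1 h⟩

theorem dense_freeTuples_prod_iff :
    Dense (freeTuples (G × H) ι) ↔ Dense (freeTuples G ι) ∨ Dense (freeTuples H ι) := by
  rw [freeTuples_prod, ← dense_prod_univ_union_univ_prod_iff]
  exact (Homeomorph.arrowProdEquivProdArrow ι _ _).isOpenQuotientMap.dense_preimage_iff

end freeTuples

theorem stmt_1_general (κ : Cardinal.{u})
    {G : Type v} [Group G] [TopologicalSpace G]
    {H : Type w} [Group H] [TopologicalSpace H] :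
    AlmostFree (G × H) κ ↔ AlmostFree G κ ∨ AlmostFree H κ := by
  rw [← κ.mk_out]
  simp only [almostFree_mk_iff, dense_freeTuples_prod_iff]

/-- For a cardinal `κ > 0` and topological groups `G` and `H`, the direct product `G × H`
(with the product topology) is almost `κ`-free if and only if at least one of `G` and `H`
is almost `κ`-free. -/
theorem stmt_1 (κ : Cardinal.{u}) (hκ : 0 < κ)
    {G : Type v} [Group G] [TopologicalSpace G] [IsTopologicalGroup G]
    {H : Type w} [Group H] [TopologicalSpace H] [IsTopologicalGroup H] :
    AlmostFree (G × H) κ ↔ AlmostFree G κ ∨ AlmostFree H κ :=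
  stmt_1_general κ
end

section
/- Let G be a topological group. Then G is almost free (i.e., almost n-free for every positive integer n) if and only if G is almost ℵ₀-free. -/
universe u v

/-
Precomposition with an injection `ι → κ` maps free tuples to free tuples and is a continuous
surjection `G^κ → G^ι`, so almost `κ`-freeness descends to smaller cardinals.

Conversely, a basic open set of `G^ι`, `ι` countable, constrains only finitely many coordinates,
indexed by `s`. Take a free tuple `(t, x, y) ∈ G^(s ⊕ 2)` with `t` in the constraints and fill
the other coordinates with the conjugates `y^k x y^(-k)`. The result is free since, in the free
group on `A ⊕ {x, y}`, `A` together with the `y^k x y^(-k)` (`k ∈ ℤ`) is a free basis: the map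
to `F(A ⊕ ℤ) ⋊ ℤ` sending `x` to the generator `0` and `y` to `1 ∈ ℤ`, which acts by
translating the generators, sends `y^k x y^(-k)` to the generator `k`.
-/

open Function FreeGroup Set

namespace FreeGroup

def shift (A : Type*) : Multiplicative ℤ →* MulAut (FreeGroup (A ⊕ ℤ)) where
  toFun k := freeGroupCongr (Equiv.sumCongr (Equiv.refl A) (Equiv.addRight k.toAdd))
  map_one' := MulEquiv.toMonoidHom_injective <| ext_hom _ _ fun x => by cases x <;> simp
  map_mul' k l := MulEquiv.toMonoidHom_injective <| ext_hom _ _ fun x => by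
    cases x <;> simp [add_assoc, add_comm k.toAdd]

@[simp]
theorem shift_of_inr {A : Type*} (k : Multiplicative ℤ) (m : ℤ) :
    shift A k (of (.inr m)) = of (.inr (m + k.toAdd)) := by
  simp [shift]

def conjZPowFamily (A : Type*) {B : Type*} (b₀ b₁ : B) : A ⊕ ℤ → FreeGroup (A ⊕ B) :=
  Sum.elim (fun a => of (.inl a)) fun k =>
    of (.inr b₁) ^ k * of (.inr b₀) * (of (.inr b₁) ^ k)⁻¹

theorem injective_lift_conjZPowFamily (A : Type*) {B : Type*} {b₀ b₁ : B} (hb : b₀ ≠ b₁) :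
    Injective (lift (conjZPowFamily A b₀ b₁)) := by
  classical
  set ρ : FreeGroup (A ⊕ B) →* FreeGroup (A ⊕ ℤ) ⋊[shift A] Multiplicative ℤ :=
    lift (Sum.elim (fun a => .inl (of (.inl a))) fun b =>
      if b = b₀ then .inl (of (.inr 0)) else if b = b₁ then .inr (.ofAdd 1) else 1) with hρ
  have hρ₀ : ρ (of (.inr b₀)) = .inl (of (.inr 0)) := by simp [hρ]
  have hρ₁ : ρ (of (.inr b₁)) = .inr (.ofAdd 1) := by simp [hρ, hb.symm]
  have hρinl : ρ.comp (lift (conjZPowFamily A b₀ b₁)) = SemidirectProduct.inl := by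
    refine ext_hom _ _ ?_
    rintro (a | k)
    · simp [hρ, conjZPowFamily]
    · simp only [conjZPowFamily, MonoidHom.comp_apply, lift_apply_of, Sum.elim_inr, _root_.map_mul,
        _root_.map_inv, map_zpow, hρ₀, hρ₁]
      rw [← map_zpow, ← _root_.map_inv, ← SemidirectProduct.inl_aut, shift_of_inr]
      simp
  refine Injective.of_comp (f := ρ) ?_
  rw [← MonoidHom.coe_comp, hρinl]
  exact SemidirectProduct.inl_injective

end FreeGroup

section FreeTuples

variable {G : Type*} [Group G] {ι κ : Type*}

theorem comp_mem_freeTuples {g : κ → G} (hg : g ∈ freeTuples G κ) {e : ι → κ}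
    (he : Injective e) : g ∘ e ∈ freeTuples G ι := by
  have : lift (g ∘ e) = (lift g).comp (map e) := ext_hom _ _ fun i => by simp
  change Injective (lift (g ∘ e))
  rw [this]
  exact hg.comp (map_injective he)

theorem lift_comp_mem_freeTuples {g : κ → G} (hg : g ∈ freeTuples G κ)
    {f : ι → FreeGroup κ} (hf : f ∈ freeTuples (FreeGroup κ) ι) :
    lift g ∘ f ∈ freeTuples G ι := by
  have : lift (lift g ∘ f) = (lift g).comp (lift f) := ext_hom _ _ fun i => by simp
  change Injective (lift (lift g ∘ f))
  rw [this]
  exact hg.comp hf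

end FreeTuples

theorem Dense.image_comp_right {X ι κ : Type*} [TopologicalSpace X] [Nonempty X]
    {S : Set (κ → X)} (hS : Dense S) {e : ι → κ} (he : Injective e) :
    Dense ((· ∘ e) '' S) :=
  he.surjective_comp_right.denseRange.dense_image
    (continuous_pi fun i => continuous_apply (e i)) hS

theorem dense_of_forall_dense_image_restrict {ι : Type*} {X : ι → Type*}
    [∀ i, TopologicalSpace (X i)] {S : Set (∀ i, X i)}
    (h : ∀ s : Finset ι, Dense (s.restrict '' S)) : Dense S := by
  refine dense_iff_inter_open.2 fun U hU ⟨x, hx⟩ => ?_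
  obtain ⟨s, V, hV, hVU⟩ := isOpen_pi_iff.1 hU x hx
  have hW : IsOpen (univ.pi fun i : s => V i) :=
    isOpen_set_pi finite_univ fun i _ => (hV i i.2).1
  obtain ⟨_, hyV, y, hyS, rfl⟩ := dense_iff_inter_open.1 (h s) _ hW
    ⟨s.restrict x, fun i _ => (hV i i.2).2⟩
  exact ⟨y, hVU fun i hi => hyV ⟨i, hi⟩ trivial, hyS⟩

theorem AlmostFree.mono {G : Type v} [Group G] [TopologicalSpace G] {κ μ : Cardinal.{u}}
    (h : AlmostFree G κ) (hμκ : μ ≤ κ) : AlmostFree G μ := by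
  intro ι hι
  obtain ⟨e⟩ : Nonempty (ι ↪ κ.out) := by rwa [← Cardinal.le_def, Cardinal.mk_out, hι]
  exact ((h _ κ.mk_out).image_comp_right e.injective).mono
    (image_subset_iff.2 fun _ hg => comp_mem_freeTuples (e := e) hg e.injective)

theorem dense_freeTuples_of_countable {G : Type v} [Group G] [TopologicalSpace G]
    (h : ∀ n : ℕ, 2 ≤ n → AlmostFree.{u} G n) (ι : Type u) [Countable ι] :
    Dense (freeTuples G ι) := by
  classical
  refine dense_of_forall_dense_image_restrict fun s => ?_
  obtain ⟨enc, henc⟩ := Countable.exists_injective_nat {i // i ∉ s}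
  let e : ι → s ⊕ ℤ := Sum.map id ((↑) ∘ enc) ∘ (Equiv.sumCompl (· ∈ s)).symm
  have he : Injective e :=
    (Sum.map_injective.2 ⟨injective_id, Nat.cast_injective.comp henc⟩).comp (Equiv.injective _)
  have he_mem (i : s) : e i = .inl i := by simp [e, Equiv.sumCompl_symm_apply_of_pos i.2]
  have hB : (⟨0⟩ : ULift.{u} (Fin 2)) ≠ ⟨1⟩ := by simp
  have hfree : Dense (freeTuples G (s ⊕ ULift.{u} (Fin 2))) :=
    h (s.card + 2) (by omega) _ (by simp)
  refine (hfree.image_comp_right Sum.inl_injective).mono ?_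
  rintro _ ⟨t, ht, rfl⟩
  refine ⟨lift t ∘ conjZPowFamily s ⟨0⟩ ⟨1⟩ ∘ e, lift_comp_mem_freeTuples ht
    (comp_mem_freeTuples (injective_lift_conjZPowFamily s hB) he), ?_⟩
  funext i
  simp [he_mem, conjZPowFamily]

theorem stmt_4_general {G : Type v} [Group G] [TopologicalSpace G] :
    (∀ n : ℕ, 0 < n → AlmostFree.{u} G n) ↔ AlmostFree.{u} G Cardinal.aleph0 := by
  refine ⟨fun h ι hι => ?_, fun h n _ => h.mono Cardinal.natCast_lt_aleph0.le⟩
  have : Countable ι := Cardinal.mk_le_aleph0_iff.1 hι.le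
  exact dense_freeTuples_of_countable (fun n hn => h n (by omega)) ι

/-- A topological group `G` is almost free (i.e., almost `n`-free for every positive
integer `n`) if and only if it is almost `ℵ₀`-free. -/
theorem stmt_4 {G : Type v} [Group G] [TopologicalSpace G] [IsTopologicalGroup G] :
    (∀ n : ℕ, 0 < n → AlmostFree.{u} G n) ↔ AlmostFree.{u} G Cardinal.aleph0 :=
  stmt_4_general
end

section
/- Let ι be a type with at least two elements, and suppose the free group F = FreeGroup ι carries a group topology (i.e., F is a topological group) that is not discrete. Then every open neighborhood U of the identity in F is not commutative (there exist a, b ∈ U with a*b ≠ b*a); consequently, U contains two elements that freely generate a free subgroup of rank 2 (i.e., the homomorphism from the free group on two generators sending the generators to these two elements is injective). -/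
universe u v

/-!
By Nielsen–Schreier every subgroup of a free group is free, and a free group is commutative
only if it has at most one generator. Hence commuting elements of a free group are powers of a
common element, centralizers of nontrivial elements are infinite cyclic, and commutation is
transitive on nontrivial elements.

If an identity neighbourhood `U` were commutative, non-discreteness gives `w ≠ 1` with `w`,
`x w x⁻¹` and `y w y⁻¹` in `U`, where `x`, `y` are two distinct generators. An element commuting
with its conjugate by `g` commutes with `g` (conjugation by `g` preserves its cyclic centralizer),
so `w` commutes with `x` and `y`, and by transitivity `x` and `y` commute, which they do not.

For non-commuting `a`, `b` the subgroup they generate is free on at least two generators, so the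
surjection from the free group of rank two onto it is injective: free groups are residually
finite (a reduced word of length `n` moves a point of `{0, …, n}` under suitable permutations),
and counting homomorphisms into a finite group `K` shows that every homomorphism to `K` factors
through that surjection.
-/

open Subgroup Function

namespace FreeGroup

variable {α : Type*}

theorem eq_of_commute_of {i j : α} (h : Commute (of i) (of j)) : i = j := by
  have hS₃ : ¬Commute (Equiv.swap 0 1 : Equiv.Perm (Fin 3)) (Equiv.swap 1 2) := by
    unfold Commute SemiconjBy
    decide
  classical
  by_contra hij
  let σ : α → Equiv.Perm (Fin 3) := fun k ↦
    if k = i then Equiv.swap 0 1 else if k = j then Equiv.swap 1 2 else 1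
  have := h.map (lift σ)
  simp only [lift_apply_of, σ, if_true, if_neg (Ne.symm hij)] at this
  exact hS₃ this

theorem isCyclic_of_subsingleton [Subsingleton α] : IsCyclic (FreeGroup α) := by
  cases isEmpty_or_nonempty α
  · infer_instance
  · have := uniqueOfSubsingleton (Classical.arbitrary α)
    infer_instance

open Classical in
noncomputable def exponentSum (i : α) : FreeGroup α →* Multiplicative ℤ :=
  lift (Pi.mulSingle i (Multiplicative.ofAdd 1))

@[simp]
theorem exponentSum_of_self (i : α) : exponentSum i (of i) = Multiplicative.ofAdd 1 := by
  simp [exponentSum]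

@[simp]
theorem exponentSum_of_of_ne {i j : α} (h : j ≠ i) : exponentSum i (of j) = 1 := by
  simp [exponentSum, h]

end FreeGroup

namespace IsFreeGroup

variable {G : Type u} [Group G] [IsFreeGroup G]

theorem isMulCommutative_iff_subsingleton_generators :
    IsMulCommutative G ↔ Subsingleton (Generators G) := by
  constructor
  · intro _
    refine ⟨fun s t ↦ FreeGroup.eq_of_commute_of ?_⟩
    simpa [of] using Commute.map (mul_comm' (of s) (of t)) (toFreeGroup G)
  · intro _
    have := FreeGroup.isCyclic_of_subsingleton (α := Generators G)
    have := isCyclic_of_surjective (mulEquiv G) (mulEquiv G).surjective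
    infer_instance

theorem isCyclic_of_isMulCommutative_s6 [IsMulCommutative G] : IsCyclic G :=
  have := isMulCommutative_iff_subsingleton_generators.1 ‹_›
  have := FreeGroup.isCyclic_of_subsingleton (α := Generators G)
  isCyclic_of_surjective (mulEquiv G) (mulEquiv G).surjective

theorem exists_mem_zpowers_of_commute {a b : G} (h : Commute a b) :
    ∃ z : G, a ∈ zpowers z ∧ b ∈ zpowers z := by
  have := isMulCommutative_closure (k := {a, b}) (by
    rintro x (rfl | rfl) y (rfl | rfl) <;> first | rfl | exact h | exact h.symm)
  obtain ⟨z, hz⟩ := (closure {a, b}).isCyclic_iff_exists_zpowers_eq_top.1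
    isCyclic_of_isMulCommutative_s6
  exact ⟨z, hz ▸ subset_closure (by simp), hz ▸ subset_closure (by simp)⟩

end IsFreeGroup

namespace FreeGroup

variable {α : Type u}

theorem mem_zpowers_of_commute_of {a : FreeGroup α} {i : α} (h : Commute a (of i)) :
    a ∈ zpowers (of i) := by
  obtain ⟨z, ha, ⟨m, hm⟩⟩ := IsFreeGroup.exists_mem_zpowers_of_commute h
  have hm1 : m * Multiplicative.toAdd (exponentSum i z) = 1 := by
    simpa using congrArg (Multiplicative.toAdd ∘ exponentSum i) hm
  have hz : z ∈ zpowers (of i) := by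
    rcases Int.eq_one_or_neg_one_of_mul_eq_one hm1 with rfl | rfl <;> simp [← hm]
  exact zpowers_le.2 hz ha

theorem subsingleton_of_forall_commute {c : FreeGroup α} (hc : c ≠ 1) (h : ∀ g, Commute c g) :
    Subsingleton α := by
  refine ⟨fun i j ↦ by_contra fun hij ↦ hc ?_⟩
  obtain ⟨m, rfl⟩ := mem_zpowers_iff.1 (mem_zpowers_of_commute_of (h (of i)))
  obtain ⟨n, hn⟩ := mem_zpowers_iff.1 (mem_zpowers_of_commute_of (h (of j)))
  have : m = 0 := by simpa [Ne.symm hij] using congrArg (exponentSum i) hn.symm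
  simp [this]

end FreeGroup

namespace IsFreeGroup

variable {G : Type u} [Group G] [IsFreeGroup G]

theorem isMulCommutative_of_forall_commute {c : G} (hc : c ≠ 1) (h : ∀ g, Commute c g) :
    IsMulCommutative G := by
  refine isMulCommutative_iff_subsingleton_generators.2 <|
    FreeGroup.subsingleton_of_forall_commute (c := toFreeGroup G c) (by simpa using hc) fun g ↦ ?_
  simpa using (h ((toFreeGroup G).symm g)).map (toFreeGroup G)

theorem commute_trans {a b c : G} (hc : c ≠ 1) (hac : Commute a c) (hcb : Commute c b) :
    Commute a b := by
  set W := closure {a, b, c}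
  have hW : W ≤ centralizer {c} := (closure_le _).2 <| by
    rintro x (rfl | rfl | rfl) <;> rw [SetLike.mem_coe, mem_centralizer_singleton_iff]
    exacts [hac.eq, hcb.eq.symm]
  have := isMulCommutative_of_forall_commute (c := (⟨c, subset_closure (by simp)⟩ : W))
    (by simpa [Subtype.ext_iff] using hc)
    fun g ↦ Subtype.ext (mem_centralizer_singleton_iff.1 (hW g.2)).symm
  exact congrArg Subtype.val
    (mul_comm' (⟨a, subset_closure (by simp)⟩ : W) ⟨b, subset_closure (by simp)⟩)

theorem exists_centralizer_eq_zpowers {c : G} (hc : c ≠ 1) :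
    ∃ z : G, centralizer {c} = zpowers z := by
  have : IsMulCommutative (centralizer {c}) := .of_setLike_mul_comm fun x hx y hy ↦
    commute_trans hc (mem_centralizer_singleton_iff.1 hx) (mem_centralizer_singleton_iff.1 hy).symm
  obtain ⟨z, hz⟩ := (centralizer {c}).isCyclic_iff_exists_zpowers_eq_top.1
    isCyclic_of_isMulCommutative_s6
  exact ⟨z, hz.symm⟩

theorem map_conj_centralizer_eq {c g : G} (hc : c ≠ 1) (h : Commute c (g * c * g⁻¹)) :
    (centralizer {c}).map (MulAut.conj g).toMonoidHom = centralizer {c} := by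
  have hgcg : g * c * g⁻¹ ≠ 1 := by simpa [mul_inv_eq_one] using hc
  ext t
  rw [mem_map_equiv, MulAut.conj_symm_apply, mem_centralizer_singleton_iff,
    mem_centralizer_singleton_iff]
  change Commute (g⁻¹ * t * g) c ↔ Commute t c
  rw [← Commute.conj_iff g, show g * (g⁻¹ * t * g) * g⁻¹ = t by group]
  exact ⟨fun ht ↦ commute_trans hgcg ht h.symm, fun ht ↦ commute_trans hc ht h⟩

end IsFreeGroup

namespace FreeGroup

variable {α : Type u}

theorem commute_of_commute_conj {c g : FreeGroup α} (hc : c ≠ 1) (h : Commute c (g * c * g⁻¹)) :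
    Commute c g := by
  obtain ⟨z, hz⟩ := IsFreeGroup.exists_centralizer_eq_zpowers hc
  have hcz : c ∈ zpowers z := hz ▸ mem_centralizer_singleton_iff.2 rfl
  have hz1 : z ≠ 1 := by
    rintro rfl
    exact hc (by simpa using hcz)
  have hconj : zpowers (g * z * g⁻¹) = zpowers z := by
    simpa [hz] using IsFreeGroup.map_conj_centralizer_eq hc h
  -- conjugation by `g` inverts or fixes `z`, so conjugation by `g ^ 2` fixes it
  have hg2 : Commute (g ^ 2) z := by
    have : g ^ 2 * z * (g ^ 2)⁻¹ = z := by
      rw [show g ^ 2 * z * (g ^ 2)⁻¹ = g * (g * z * g⁻¹) * g⁻¹ by simp [sq, mul_assoc]]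
      rcases (zpowers_eq_zpowers_iff (not_isOfFinOrder_of_isMulTorsionFree hz1)).1 hconj.symm
        with h1 | h1
      · simp only [← h1]
      · rw [← h1, show g * z⁻¹ * g⁻¹ = (g * z * g⁻¹)⁻¹ by group, ← h1, inv_inv]
    exact mul_inv_eq_iff_eq_mul.1 this
  have hgz : Commute g z := by
    by_cases hg : g ^ 2 = 1
    · rw [sq_eq_one.1 hg]
      exact Commute.one_left z
    · exact IsFreeGroup.commute_trans hg (Commute.self_pow g 2) hg2
  obtain ⟨n, rfl⟩ := mem_zpowers_iff.1 hcz
  exact (hgz.zpow_right n).symm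

open Topology in
theorem exists_not_commute_of_mem_nhds_one [TopologicalSpace (FreeGroup α)]
    [IsTopologicalGroup (FreeGroup α)] (hnd : ¬DiscreteTopology (FreeGroup α))
    {x y : FreeGroup α} (hxy : ¬Commute x y) {U : Set (FreeGroup α)} (hU : U ∈ 𝓝 1) :
    ∃ a ∈ U, ∃ b ∈ U, ¬Commute a b := by
  by_contra! hcomm
  have hconj (g : FreeGroup α) : (fun t ↦ g * t * g⁻¹) ⁻¹' U ∈ 𝓝 1 :=
    ((continuous_const.mul continuous_id).mul continuous_const).continuousAt.preimage_mem_nhds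
      (by simpa using hU)
  set W := U ∩ (fun t ↦ x * t * x⁻¹) ⁻¹' U ∩ (fun t ↦ y * t * y⁻¹) ⁻¹' U
  have hW : W ∈ 𝓝 1 := Filter.inter_mem (Filter.inter_mem hU (hconj x)) (hconj y)
  obtain ⟨w, ⟨⟨hwU, hwx⟩, hwy⟩, hw1⟩ : ∃ w ∈ W, w ≠ 1 := by
    by_contra! hW1
    exact hnd <| discreteTopology_of_isOpen_singleton_one <| isOpen_iff_mem_nhds.2
      fun _ h1 ↦ by
        rw [Set.mem_singleton_iff.1 h1]
        exact Filter.mem_of_superset hW hW1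
  have hwx' := commute_of_commute_conj hw1 (hcomm w hwU _ hwx)
  have hwy' := commute_of_commute_conj hw1 (hcomm w hwU _ hwy)
  exact hxy (IsFreeGroup.commute_trans hw1 hwx'.symm hwy')

end FreeGroup

theorem Equiv.Perm.exists_forall_apply_eq_of_rel {β : Type*} [Finite β] {r : β → β → Prop}
    (hfun : ∀ a b b', r a b → r a b' → b = b') (hinj : ∀ a a' b, r a b → r a' b → a = a') :
    ∃ σ : Equiv.Perm β, ∀ a b, r a b → σ a = b := by
  classical
  let f : β → β := fun a ↦ if h : ∃ b, r a b then h.choose else a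
  have hf (a b : β) (hab : r a b) : f a = b := by
    have h : ∃ b, r a b := ⟨b, hab⟩
    simp only [f, dif_pos h]
    exact hfun _ _ _ h.choose_spec hab
  have hinjOn : Set.InjOn f {a | ∃ b, r a b} := by
    intro a ⟨b, hab⟩ a' ⟨b', hab'⟩ h
    rw [hf a b hab, hf a' b' hab'] at h
    exact hinj a a' b hab (h ▸ hab')
  exact ⟨(Equiv.Set.imageOfInjOn f _ hinjOn).extendSubtype, fun a b hab ↦ by
    rw [Equiv.extendSubtype_apply_of_mem _ _ ⟨b, hab⟩]
    exact hf a b hab⟩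

namespace FreeGroup

variable {α : Type*}

theorem IsReduced.snd_eq_of_getElem? {L : List (α × Bool)} (hL : IsReduced L) {j : ℕ} {x : α}
    {b b' : Bool} (h : L[j]? = some (x, b)) (h' : L[j + 1]? = some (x, b')) : b = b' := by
  obtain ⟨hj, hLj⟩ := List.getElem?_eq_some_iff.1 h'
  obtain ⟨_, hLj'⟩ := List.getElem?_eq_some_iff.1 h
  have := List.isChain_iff_getElem.1 hL j hj
  simp_all

theorem IsReduced.exists_perm_step {L : List (α × Bool)} (hL : IsReduced L) :
    ∃ σ : α → Equiv.Perm (Fin (L.length + 1)), ∀ (j : ℕ) (hj : j < L.length) (x : α),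
      (L[j]? = some (x, true) → σ x ⟨j + 1, by omega⟩ = ⟨j, by omega⟩) ∧
      (L[j]? = some (x, false) → σ x ⟨j, by omega⟩ = ⟨j + 1, by omega⟩) := by
  let r (x : α) (p q : Fin (L.length + 1)) : Prop := ∃ j : ℕ,
    L[j]? = some (x, true) ∧ (p : ℕ) = j + 1 ∧ (q : ℕ) = j ∨
    L[j]? = some (x, false) ∧ (p : ℕ) = j ∧ (q : ℕ) = j + 1
  have hσ (x : α) : ∃ σ : Equiv.Perm (Fin (L.length + 1)), ∀ p q, r x p q → σ p = q := by
    refine Equiv.Perm.exists_forall_apply_eq_of_rel ?_ ?_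
    · rintro p q q' ⟨j, ⟨hj, hp, hq⟩ | ⟨hj, hp, hq⟩⟩ ⟨j', ⟨hj', hp', hq'⟩ | ⟨hj', hp', hq'⟩⟩
      · ext; omega
      · obtain rfl : j' = j + 1 := by omega
        exact absurd (hL.snd_eq_of_getElem? hj hj') (by decide)
      · obtain rfl : j = j' + 1 := by omega
        exact absurd (hL.snd_eq_of_getElem? hj' hj) (by decide)
      · ext; omega
    · rintro p p' q ⟨j, ⟨hj, hp, hq⟩ | ⟨hj, hp, hq⟩⟩ ⟨j', ⟨hj', hp', hq'⟩ | ⟨hj', hp', hq'⟩⟩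
      · ext; omega
      · obtain rfl : j = j' + 1 := by omega
        exact absurd (hL.snd_eq_of_getElem? hj' hj) (by decide)
      · obtain rfl : j' = j + 1 := by omega
        exact absurd (hL.snd_eq_of_getElem? hj hj') (by decide)
      · ext; omega
  choose σ hσ using hσ
  exact ⟨σ, fun j _ x ↦ ⟨fun h ↦ hσ x _ _ ⟨j, .inl ⟨h, rfl, rfl⟩⟩,
    fun h ↦ hσ x _ _ ⟨j, .inr ⟨h, rfl, rfl⟩⟩⟩⟩

theorem IsReduced.exists_perm_lift_mk_apply_last {L : List (α × Bool)} (hL : IsReduced L) :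
    ∃ σ : α → Equiv.Perm (Fin (L.length + 1)), lift σ (mk L) (Fin.last L.length) = 0 := by
  obtain ⟨σ, hσ⟩ := hL.exists_perm_step
  refine ⟨σ, ?_⟩
  have key (j : ℕ) (hj : j ≤ L.length) :
      lift σ (mk (L.drop j)) (Fin.last L.length) = ⟨j, by omega⟩ := by
    induction hj using Nat.decreasingInduction with
    | self => simp; rfl
    | of_succ k hk ih =>
      rw [List.drop_eq_getElem_cons hk, ← List.singleton_append, ← mul_mk, _root_.map_mul,
        Equiv.Perm.mul_apply, ih]
      have hLk : L[k]? = some L[k] := List.getElem?_eq_getElem hk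
      rcases hx : L[k] with ⟨x, _ | _⟩ <;> rw [hx] at hLk
      · rw [show mk [(x, false)] = (of x)⁻¹ from rfl, _root_.map_inv, lift_apply_of,
          Equiv.Perm.inv_eq_iff_eq]
        exact ((hσ k hk x).2 hLk).symm
      · rw [show mk [(x, true)] = of x from rfl, lift_apply_of]
        exact (hσ k hk x).1 hLk
  simpa using key 0 (Nat.zero_le _)

theorem exists_monoidHom_perm_ne_one {w : FreeGroup α} (hw : w ≠ 1) :
    ∃ (n : ℕ) (φ : FreeGroup α →* Equiv.Perm (Fin n)), φ w ≠ 1 := by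
  classical
  obtain ⟨σ, hσ⟩ := (isReduced_toWord (x := w)).exists_perm_lift_mk_apply_last
  refine ⟨_, lift σ, fun h ↦ hw ?_⟩
  rw [mk_toWord, h] at hσ
  exact toWord_eq_nil_iff.1 (List.length_eq_zero_iff.1 (congrArg Fin.val hσ))

theorem injective_of_surjective_of_embedding [Finite α] {H : Type*} [Group H] [IsFreeGroup H]
    (f : FreeGroup α →* H) (hf : Surjective f) (e : α ↪ IsFreeGroup.Generators H) :
    Injective f := by
  refine (injective_iff_map_eq_one f).2 fun k hk ↦ by_contra fun hk1 ↦ ?_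
  obtain ⟨n, χ, hχ⟩ := exists_monoidHom_perm_ne_one hk1
  have hcomp : Injective fun ψ : H →* Equiv.Perm (Fin n) ↦ ψ.comp f :=
    fun _ _ h ↦ (MonoidHom.cancel_right hf).1 h
  have : Finite (FreeGroup α →* Equiv.Perm (Fin n)) := .of_equiv _ lift
  have : Finite (H →* Equiv.Perm (Fin n)) := .of_injective _ hcomp
  have : Finite (IsFreeGroup.Generators H → Equiv.Perm (Fin n)) :=
    .of_equiv _ IsFreeGroup.lift.symm
  have hcard :
      Nat.card (FreeGroup α →* Equiv.Perm (Fin n)) ≤ Nat.card (H →* Equiv.Perm (Fin n)) :=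
    calc Nat.card (FreeGroup α →* Equiv.Perm (Fin n)) = Nat.card (α → Equiv.Perm (Fin n)) :=
          Nat.card_congr lift.symm
      _ ≤ Nat.card (IsFreeGroup.Generators H → Equiv.Perm (Fin n)) :=
          Nat.card_le_card_of_injective _ e.arrowCongrLeft.injective
      _ = Nat.card (H →* Equiv.Perm (Fin n)) := Nat.card_congr IsFreeGroup.lift
  obtain ⟨ψ, rfl⟩ := (hcomp.bijective_of_nat_card_le hcard).2 χ
  exact hχ (by rw [MonoidHom.comp_apply, hk, _root_.map_one])

theorem injective_lift_of_not_commute {α : Type u} {a b : FreeGroup α} (h : ¬Commute a b) :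
    Injective (lift ![a, b]) := by
  set H := (lift ![a, b]).range
  have hH : ¬IsMulCommutative H := fun _ ↦ h <| congrArg Subtype.val <|
    mul_comm' (⟨a, of 0, lift_apply_of⟩ : H) ⟨b, of 1, lift_apply_of⟩
  obtain ⟨s, t, hst⟩ := not_subsingleton_iff_nontrivial.1
    (mt IsFreeGroup.isMulCommutative_iff_subsingleton_generators.2 hH)
  rw [← MonoidHom.rangeRestrict_injective_iff]
  exact injective_of_surjective_of_embedding _ (MonoidHom.rangeRestrict_surjective _)
    (Function.Embedding.embFinTwo hst)

end FreeGroup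

/-- If `ι` has at least two elements and `F = FreeGroup ι` carries a non-discrete group
topology, then every open neighborhood `U` of the identity is not commutative, and
hence `U` contains two elements freely generating a free subgroup of rank 2. -/
theorem stmt_6 {ι : Type u} [Nontrivial ι]
    [TopologicalSpace (FreeGroup ι)] [IsTopologicalGroup (FreeGroup ι)]
    (hnd : ¬ DiscreteTopology (FreeGroup ι))
    (U : Set (FreeGroup ι)) (hU : IsOpen U) (h1 : (1 : FreeGroup ι) ∈ U) :
    (∃ a ∈ U, ∃ b ∈ U, a * b ≠ b * a) ∧
    ∃ a ∈ U, ∃ b ∈ U, Function.Injective (FreeGroup.lift ![a, b]) := by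
  obtain ⟨i, j, hij⟩ := exists_pair_ne ι
  obtain ⟨a, ha, b, hb, hab⟩ := FreeGroup.exists_not_commute_of_mem_nhds_one hnd
    (mt FreeGroup.eq_of_commute_of hij) (hU.mem_nhds h1)
  exact ⟨⟨a, ha, b, hb, hab⟩, a, ha, b, hb, FreeGroup.injective_lift_of_not_commute hab⟩
end

section
/- Let F be a free group of rank κ > 0 equipped with the discrete topology, and let H be a nontrivial group in which every element has finite order, equipped with the indiscrete (trivial) topology. Then in the topological group G = F × H (with the product topology), the subgroup F × {1} is dense and is freely generated, but G is not almost κ-free. -/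
universe u v

/-! Free groups are torsion-free, so no member of a free tuple can lie in an open set of torsion
elements; in `F × H` with `F` discrete and `H` torsion, `{1} × H` is such a set. On the other
hand `F × {1}` is dense because the indiscrete factor cannot separate it from anything. -/

lemma FreeGroup.lift_prod_one_eq_inl (ι : Type u) (H : Type v) [Group H] :
    FreeGroup.lift (fun i => ((FreeGroup.of i, 1) : FreeGroup ι × H)) =
      MonoidHom.inl (FreeGroup ι) H :=
  FreeGroup.ext_hom _ _ fun _ => FreeGroup.lift_apply_of

lemma MonoidHom.inl_injective (G : Type u) (H : Type v) [MulOneClass G] [MulOneClass H] :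
    Function.Injective (MonoidHom.inl G H) :=
  fun _ _ h => congrArg Prod.fst h

lemma MonoidHom.dense_range_inl (G : Type u) (H : Type v) [Group G] [Group H]
    [TopologicalSpace G] [TopologicalSpace H] [IndiscreteTopology H] :
    Dense ((MonoidHom.inl G H).range : Set (G × H)) := by
  have hrange : ((MonoidHom.inl G H).range : Set (G × H)) = Set.univ ×ˢ {1} := by
    ext ⟨x, h⟩
    simp [Prod.ext_iff, eq_comm]
  rw [hrange]
  exact dense_univ.prod (dense_indiscrete (Set.singleton_nonempty 1))

lemma not_isOfFinOrder_of_mem_freeTuples {G : Type v} [Group G] {ι : Type u} {g : ι → G}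
    (hg : g ∈ freeTuples G ι) (i : ι) : ¬ IsOfFinOrder (g i) := by
  rw [← FreeGroup.lift_apply_of (f := g), Function.Injective.isOfFinOrder_iff hg,
    isOfFinOrder_iff_eq_one]
  exact FreeGroup.of_ne_one i

lemma not_dense_freeTuples_of_isOpen_of_isOfFinOrder {G : Type v} [Group G] [TopologicalSpace G]
    {ι : Type u} [Nonempty ι] {U : Set G} (hU : IsOpen U) (hne : U.Nonempty)
    (hfin : ∀ g ∈ U, IsOfFinOrder g) : ¬ Dense (freeTuples G ι) := by
  intro hdense
  let i := Classical.arbitrary ι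
  obtain ⟨x, hx⟩ := hne
  obtain ⟨g, hgU, hg⟩ :=
    hdense.inter_open_nonempty _ (hU.preimage (continuous_apply i)) ⟨fun _ => x, hx⟩
  exact not_isOfFinOrder_of_mem_freeTuples hg i (hfin _ hgU)

lemma not_almostFree_prod_of_isOfFinOrder {G : Type u} {H : Type v} [Group G] [Group H]
    [TopologicalSpace G] [DiscreteTopology G] [TopologicalSpace H]
    (hfin : ∀ h : H, IsOfFinOrder h) {κ : Cardinal.{u}} (hκ : κ ≠ 0) :
    ¬ AlmostFree (G × H) κ := by
  intro hfree
  have : Nonempty κ.out := Cardinal.mk_ne_zero_iff.mp (κ.mk_out.symm ▸ hκ)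
  refine not_dense_freeTuples_of_isOpen_of_isOfFinOrder
    ((isOpen_discrete {1}).prod isOpen_univ) ⟨1, rfl, trivial⟩ ?_ (hfree κ.out κ.mk_out)
  rintro ⟨g, h⟩ ⟨rfl : g = 1, -⟩
  exact IsOfFinOrder.one.prod_mk (hfin h)

theorem stmt_12_general (κ : Cardinal.{u}) (hκ : 0 < κ) (ι : Type u)
    {H : Type v} [Group H] (hfin : ∀ h : H, IsOfFinOrder h)
    [tF : TopologicalSpace (FreeGroup ι)] (htF : tF = ⊥)
    [tH : TopologicalSpace H] (htH : tH = ⊤) :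
    Function.Injective
      (FreeGroup.lift fun i => ((FreeGroup.of i, 1) : FreeGroup ι × H)) ∧
    Dense ((FreeGroup.lift fun i => ((FreeGroup.of i, 1) : FreeGroup ι × H)).range :
      Set (FreeGroup ι × H)) ∧
    ¬ AlmostFree (FreeGroup ι × H) κ := by
  have : DiscreteTopology (FreeGroup ι) := ⟨htF⟩
  have : IndiscreteTopology H := ⟨htH⟩
  rw [FreeGroup.lift_prod_one_eq_inl]
  exact ⟨MonoidHom.inl_injective _ _, MonoidHom.dense_range_inl _ _,
    not_almostFree_prod_of_isOfFinOrder hfin hκ.ne'⟩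

/-- Let `F = FreeGroup ι` be a free group of rank `κ > 0` with the discrete topology,
and `H` a nontrivial group all of whose elements have finite order, with the indiscrete
topology. Then in `G = F × H` (with the product topology) the subgroup `F × {1}` (the
range of the canonical embedding of `F`) is dense and freely generated, but `G` is not
almost `κ`-free. -/
theorem stmt_12 (κ : Cardinal.{u}) (hκ : 0 < κ) (ι : Type u) (hι : Cardinal.mk ι = κ)
    {H : Type v} [Group H] [Nontrivial H] (hfin : ∀ h : H, IsOfFinOrder h)
    [tF : TopologicalSpace (FreeGroup ι)] (htF : tF = ⊥)
    [IsTopologicalGroup (FreeGroup ι)]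
    [tH : TopologicalSpace H] (htH : tH = ⊤) [IsTopologicalGroup H] :
    Function.Injective
      (FreeGroup.lift fun i => ((FreeGroup.of i, 1) : FreeGroup ι × H)) ∧
    Dense ((FreeGroup.lift fun i => ((FreeGroup.of i, 1) : FreeGroup ι × H)).range :
      Set (FreeGroup ι × H)) ∧
    ¬ AlmostFree (FreeGroup ι × H) κ :=
  stmt_12_general κ hκ ι hfin (tF := tF) htF (tH := tH) htH
end

section
/- Let Ω be an infinite set. Then Sym(Ω), the group of all permutations of Ω, contains a free subgroup of rank 2^|Ω|; moreover this free subgroup can be taken to be dense in the function topology. That is, there is a type ι of cardinality 2^|Ω| and a map f : ι → Sym(Ω) such that the induced homomorphism FreeGroup ι → Sym(Ω) is injective and the image subgroup is dense. -/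
universe u

/-- The function topology on `Equiv.Perm Ω`: the topology induced by the embedding
`f ↦ (f, f⁻¹)` into `(Ω → Ω) × (Ω → Ω)`, where `Ω → Ω` carries the product topology
with `Ω` discrete. -/
def permFunctionTopology (Ω : Type u) : TopologicalSpace (Equiv.Perm Ω) :=
  letI : TopologicalSpace Ω := ⊥
  TopologicalSpace.induced
    (fun f : Equiv.Perm Ω => ((f : Ω → Ω), ((f⁻¹ : Equiv.Perm Ω) : Ω → Ω)))
    inferInstance

/-! Identify `Ω` with `Finset Ω × FreeGroup (Finset Ω)`. To a set `A ⊆ Ω` attach the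
permutation that on each block `{F} × FreeGroup (Finset Ω)` multiplies on the left by the
generator `A ∩ F`, followed by a finitely supported correction. Finitely many distinct sets
are separated by some block `F` (their traces `A ∩ F` are distinct) that none of their
corrections touches; on that block a nontrivial reduced word in these permutations acts as
left multiplication by a nontrivial element of the free group, so the permutations are free.
The corrections are indexed by a surjection from `Set Ω` onto pairs (finite set,
permutation) and make the generator agree with the permutation on the finite set, which gives
density. -/

open Function Set

theorem Equiv.Perm.exists_finite_support_eqOn {α : Type*} (π : Equiv.Perm α) (s : Finset α) :
    ∃ σ : Equiv.Perm α, {x | σ x ≠ x}.Finite ∧ EqOn σ π s := by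
  classical
  induction s using Finset.induction_on with
  | empty => exact ⟨1, by simp, by simp⟩
  | @insert a s has ih =>
    obtain ⟨σ, hfin, heq⟩ := ih
    refine ⟨Equiv.swap (σ a) (π a) * σ, ?_, ?_⟩
    · refine (hfin.union (Set.toFinite {σ a, π a})).subset fun x hx => ?_
      by_contra hx'
      simp only [mem_union, mem_ofPred_eq, not_or, not_not, mem_insert_iff,
        mem_singleton_iff] at hx'
      obtain ⟨hσx, hxa, hxπ⟩ := hx'
      apply hx
      rw [Equiv.Perm.mul_apply, hσx, Equiv.swap_apply_of_ne_of_ne hxa hxπ]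
    · intro x hx
      rcases Finset.mem_insert.1 hx with rfl | hx
      · simp [Equiv.Perm.mul_apply]
      · have hxa : x ≠ a := fun h => has (h ▸ hx)
        rw [Equiv.Perm.mul_apply, heq hx, Equiv.swap_apply_of_ne_of_ne]
        · rw [← heq hx]; exact σ.injective.ne hxa
        · exact π.injective.ne hxa

namespace FreeGroup

variable {α β : Type*}

theorem exists_finset_mem_closure (x : FreeGroup α) :
    ∃ s : Finset α, x ∈ Subgroup.closure (of '' (s : Set α)) := by
  classical
  induction x with
  | C1 => exact ⟨∅, one_mem _⟩
  | of a => exact ⟨{a}, Subgroup.subset_closure (by simp)⟩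
  | inv_of a ih =>
    obtain ⟨s, hs⟩ := ih
    exact ⟨s, inv_mem hs⟩
  | mul x y hx hy =>
    obtain ⟨s, hs⟩ := hx
    obtain ⟨t, ht⟩ := hy
    have hmono {u : Finset α} (h : u ⊆ s ∪ t) :=
      Subgroup.closure_mono (image_mono (f := of) (Finset.coe_subset.2 h))
    exact ⟨s ∪ t, mul_mem (hmono Finset.subset_union_left hs)
      (hmono Finset.subset_union_right ht)⟩

theorem map_ne_one_of_injOn {f : α → β} {s : Set α} (hf : InjOn f s) {x : FreeGroup α}
    (hx : x ∈ Subgroup.closure (of '' s)) (h1 : x ≠ 1) : map f x ≠ 1 := by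
  obtain ⟨a, ha⟩ : s.Nonempty := by
    by_contra hs
    rw [not_nonempty_iff_eq_empty.1 hs, image_empty, Subgroup.closure_empty] at hx
    exact h1 (Subgroup.mem_bot.1 hx)
  have : Nonempty α := ⟨a⟩
  have hleft : EqOn ((map (invFunOn f s)).comp (map f)) (MonoidHom.id _) (of '' s) := by
    rintro _ ⟨b, hb, rfl⟩
    simp [map.of, hf.leftInvOn_invFunOn hb]
  intro hfx
  apply h1
  have := MonoidHom.eqOn_closure hleft hx
  simpa [hfx] using this.symm

variable {ι B K : Type*}

def fiberwiseMulLeft (ℓ : B → K) : Equiv.Perm (B × FreeGroup K) :=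
  Equiv.prodShear (Equiv.refl B) fun b => Equiv.mulLeft (of (ℓ b))

theorem lift_apply_fiber_of_mem_closure {g : ι → Equiv.Perm (B × FreeGroup K)}
    {ℓ : ι → B → K} {s : Set ι} {b : B}
    (hg : ∀ i ∈ s, ∀ w, g i (b, w) = (b, of (ℓ i b) * w))
    {x : FreeGroup ι} (hx : x ∈ Subgroup.closure (of '' s)) (w : FreeGroup K) :
    lift g x (b, w) = (b, map (ℓ · b) x * w) := by
  induction hx using Subgroup.closure_induction generalizing w with
  | mem _ hx =>
    obtain ⟨i, hi, rfl⟩ := hx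
    simp [hg i hi]
  | one => simp
  | mul x y _ _ ihx ihy => simp [Equiv.Perm.mul_apply, ihy, ihx, mul_assoc]
  | inv x _ ihx =>
    rw [_root_.map_inv, _root_.map_inv, Equiv.Perm.inv_eq_iff_eq, ihx, mul_inv_cancel_left]

theorem injective_lift_mul_fiberwiseMulLeft (σ : ι → Equiv.Perm (B × FreeGroup K))
    (hσ : ∀ i, {y | σ i y ≠ y}.Finite) (ℓ : ι → B → K)
    (hℓ : ∀ (t : Finset ι) (bad : Set B), bad.Finite → ∃ b ∉ bad, InjOn (ℓ · b) t) :
    Injective (lift fun i => σ i * fiberwiseMulLeft (ℓ i)) := by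
  rw [injective_iff_map_eq_one]
  intro x hx
  obtain ⟨t, ht⟩ := exists_finset_mem_closure x
  obtain ⟨b, hb, hinj⟩ := hℓ t (⋃ i ∈ t, Prod.fst '' {y | σ i y ≠ y})
    (t.finite_toSet.biUnion fun i _ => (hσ i).image _)
  have hfiber : ∀ i ∈ (t : Set ι), ∀ w,
      (σ i * fiberwiseMulLeft (ℓ i)) (b, w) = (b, of (ℓ i b) * w) := by
    intro i hi w
    by_contra hne
    exact hb (mem_biUnion hi ⟨_, hne, rfl⟩)
  have := lift_apply_fiber_of_mem_closure hfiber ht 1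
  rw [hx, Equiv.Perm.one_apply, mul_one, Prod.mk.injEq] at this
  by_contra h1
  exact map_ne_one_of_injOn hinj ht h1 this.2.symm

end FreeGroup

open Classical in
noncomputable def Finset.trace {α : Type*} (A : Set α) (F : Finset α) : Finset α :=
  F.filter (· ∈ A)

theorem Set.Finite.exists_finset_injOn_trace {α : Type*} [Infinite α] (t : Finset (Set α))
    {bad : Set (Finset α)} (hbad : bad.Finite) :
    ∃ F ∉ bad, InjOn (fun A => F.trace A) t := by
  classical
  have hwit : ∀ A B : Set α, ∃ a, A ≠ B → (a ∈ A ↔ a ∉ B) := by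
    intro A B
    by_cases hAB : A = B
    · exact ⟨Classical.arbitrary α, fun h => (h hAB).elim⟩
    obtain ⟨a, ha⟩ := not_forall.1 (mt Set.ext hAB)
    exact ⟨a, fun _ => by tauto⟩
  choose w hw using hwit
  set S := (t ×ˢ t).image fun p => w p.1 p.2
  -- every `F ⊇ S` separates `t`; take one larger than all members of `bad`
  obtain ⟨F, hSF, hcard⟩ :=
    Infinite.exists_superset_card_eq S (S.card + hbad.toFinset.sup Finset.card + 1) (by omega)
  refine ⟨F, fun hF => ?_, fun A hA B hB hAB => ?_⟩
  · have := Finset.le_sup (f := Finset.card) (hbad.mem_toFinset.2 hF)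
    omega
  · by_contra hne
    have hwF : w A B ∈ F :=
      hSF (Finset.mem_image_of_mem _ (Finset.mem_product.2 ⟨hA, hB⟩ : (A, B) ∈ t ×ˢ t))
    have hiff := congrArg (w A B ∈ ·) hAB
    simp only [Finset.trace, Finset.mem_filter, hwF, true_and] at hiff
    have := hw A B hne
    tauto

theorem nonempty_equiv_finset_prod_freeGroup (Ω : Type*) [Infinite Ω] :
    Nonempty (Ω ≃ Finset Ω × FreeGroup (Finset Ω)) := by
  rw [← Cardinal.eq, Cardinal.mk_prod, Cardinal.lift_id, Cardinal.lift_id, Cardinal.mk_freeGroup,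
    Cardinal.mk_finset_of_infinite, max_eq_left (Cardinal.aleph0_le_mk Ω),
    Cardinal.mul_eq_self (Cardinal.aleph0_le_mk Ω)]

theorem exists_surjective_set_to_finset_prod_perm (Ω : Type*) [Infinite Ω] :
    ∃ f : Set Ω → Finset Ω × Equiv.Perm Ω, Surjective f := by
  obtain ⟨e⟩ : Nonempty (Finset Ω × Equiv.Perm Ω ↪ Set Ω) := by
    rw [← Cardinal.le_def, Cardinal.mk_prod, Cardinal.lift_id, Cardinal.lift_id,
      Cardinal.mk_finset_of_infinite, Cardinal.mk_perm_eq_two_power, Cardinal.mk_set,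
      Cardinal.mul_eq_right (Cardinal.aleph0_le_mk Ω |>.trans (Cardinal.cantor _).le)
        (Cardinal.cantor _).le (Cardinal.mk_ne_zero Ω)]
  exact ⟨invFun e, invFun_surjective e.injective⟩

theorem dense_permFunctionTopology_of_forall_finset {Ω : Type u} {S : Set (Equiv.Perm Ω)}
    (hS : ∀ (g : Equiv.Perm Ω) (T : Finset Ω), ∃ f ∈ S, EqOn f g T) :
    @Dense _ (permFunctionTopology Ω) S := by
  classical
  let _ : TopologicalSpace Ω := ⊥
  let _ := permFunctionTopology Ω
  refine fun g => mem_closure_iff.2 fun o ho hgo => ?_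
  obtain ⟨w, hw, rfl⟩ := isOpen_induced_iff.1 ho
  obtain ⟨u, v, hu, hv, hgu, hgv, huv⟩ := isOpen_prod_iff.1 hw _ _ hgo
  obtain ⟨I, U, hU, hIU⟩ := isOpen_pi_iff.1 hu _ hgu
  obtain ⟨J, V, hV, hJV⟩ := isOpen_pi_iff.1 hv _ hgv
  obtain ⟨f, hfS, hfg⟩ := hS g (I ∪ J.image ⇑g⁻¹)
  have hfg_inv : ∀ a ∈ J, f⁻¹ a = g⁻¹ a := fun a ha => by
    rw [Equiv.Perm.inv_eq_iff_eq, hfg (Finset.mem_union_right _ (Finset.mem_image_of_mem _ ha))]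
    simp
  refine ⟨f, huv ⟨hIU fun a ha => ?_, hJV fun a ha => ?_⟩, hfS⟩
  · change f a ∈ U a
    rw [hfg (Finset.mem_union_left _ ha)]
    exact (hU a ha).2
  · change f⁻¹ a ∈ V a
    rw [hfg_inv a ha]
    exact (hV a ha).2

section Construction

variable (Ω : Type u) [Infinite Ω]

noncomputable def blockEquiv : Ω ≃ Finset Ω × FreeGroup (Finset Ω) :=
  (nonempty_equiv_finset_prod_freeGroup Ω).some

noncomputable def approxTarget : Set Ω → Finset Ω × Equiv.Perm Ω :=
  (exists_surjective_set_to_finset_prod_perm Ω).choose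

theorem approxTarget_surjective : Surjective (approxTarget Ω) :=
  (exists_surjective_set_to_finset_prod_perm Ω).choose_spec

variable {Ω}

theorem exists_corrector (A : Set Ω) :
    ∃ σ : Equiv.Perm (Finset Ω × FreeGroup (Finset Ω)), {y | σ y ≠ y}.Finite ∧
      ∀ a ∈ (approxTarget Ω A).1,
        σ (FreeGroup.fiberwiseMulLeft (Finset.trace A) (blockEquiv Ω a)) =
          blockEquiv Ω ((approxTarget Ω A).2 a) := by
  classical
  set e := blockEquiv Ω
  set β := FreeGroup.fiberwiseMulLeft (Finset.trace A)
  obtain ⟨σ, hσ, heq⟩ := Equiv.Perm.exists_finite_support_eqOn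
    (e.permCongr (approxTarget Ω A).2 * β⁻¹) ((approxTarget Ω A).1.image (β ∘ e))
  refine ⟨σ, hσ, fun a ha => (heq (Finset.mem_image_of_mem _ ha)).trans ?_⟩
  simp [Equiv.permCongr_apply]

noncomputable def corrector (A : Set Ω) : Equiv.Perm (Finset Ω × FreeGroup (Finset Ω)) :=
  (exists_corrector A).choose

noncomputable def generator (A : Set Ω) : Equiv.Perm Ω :=
  (blockEquiv Ω).permCongrHom.symm (corrector A * FreeGroup.fiberwiseMulLeft (Finset.trace A))

theorem generator_eqOn_approxTarget (A : Set Ω) :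
    EqOn (generator A) (approxTarget Ω A).2 (approxTarget Ω A).1 := by
  intro a ha
  change (blockEquiv Ω).symm
    (corrector A (FreeGroup.fiberwiseMulLeft (Finset.trace A) (blockEquiv Ω a))) = _
  rw [corrector, (exists_corrector A).choose_spec.2 a ha, Equiv.symm_apply_apply]

theorem injective_lift_generator : Injective (FreeGroup.lift (generator (Ω := Ω))) := by
  have hfree := FreeGroup.injective_lift_mul_fiberwiseMulLeft (corrector (Ω := Ω))
    (fun A => (exists_corrector A).choose_spec.1) Finset.trace
    fun t _ hbad => hbad.exists_finset_injOn_trace t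
  have hcomp : FreeGroup.lift (generator (Ω := Ω)) =
      (blockEquiv Ω).permCongrHom.symm.toMonoidHom.comp
        (FreeGroup.lift fun A => corrector A * FreeGroup.fiberwiseMulLeft (Finset.trace A)) :=
    FreeGroup.ext_hom _ _ fun A => by simp [generator]
  rw [hcomp]
  exact (blockEquiv Ω).permCongrHom.symm.injective.comp hfree

theorem dense_range_lift_generator :
    @Dense _ (permFunctionTopology Ω) ((FreeGroup.lift (generator (Ω := Ω))).range : Set _) := by
  refine dense_permFunctionTopology_of_forall_finset fun g T => ?_
  obtain ⟨A, hA⟩ := approxTarget_surjective Ω (T, g)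
  refine ⟨generator A, ⟨FreeGroup.of A, FreeGroup.lift_apply_of⟩, ?_⟩
  simpa [hA] using generator_eqOn_approxTarget A

end Construction

/-- (de Bruijn) For any infinite set `Ω`, the group `Sym(Ω)` of all permutations of
`Ω` contains a free subgroup of rank `2^|Ω|`, which moreover can be taken to be dense
in the function topology. -/
theorem stmt_14 (Ω : Type u) [Infinite Ω] :
    ∃ (ι : Type u) (f : ι → Equiv.Perm Ω),
      Cardinal.mk ι = 2 ^ Cardinal.mk Ω ∧
      Function.Injective (FreeGroup.lift f) ∧
      @Dense (Equiv.Perm Ω) (permFunctionTopology Ω)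
        ((FreeGroup.lift f).range : Set (Equiv.Perm Ω)) :=
  ⟨Set Ω, generator, Cardinal.mk_set, injective_lift_generator, dense_range_lift_generator⟩
end

section
/- Let Ω be an infinite set. Then Sym(Ω), with the function topology, is almost 2^|Ω|-free. -/
universe u v

/-!
Identify the index type with the power set of `Ω` and let `Ω` absorb
`Finset Ω × FreeGroup (Finset Ω)`. The generator indexed by `s ⊆ Ω` acts on the fibre over a
finite set `F` by left multiplication with the letter `F ∩ s`. Finitely many distinct subsets
of `Ω` are already distinguished by their traces on some finite `F`, so every nontrivial word
acts nontrivially on some fibre and therefore moves infinitely many points: no nontrivial word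
lies in the normal subgroup `FSym(Ω)` of finitary permutations.

A basic neighbourhood of a tuple `(h_i)` only prescribes finitely many values, so it contains
a tuple `(g_i π_i)` with every `π_i` finitary. Modulo `FSym(Ω)` this tuple agrees with `(g_i)`,
so it is still free.
-/

open Equiv Function MulAction Topology

def finitaryPerms (Ω : Type*) : Subgroup (Perm Ω) where
  carrier := {p | (fixedBy Ω p)ᶜ.Finite}
  one_mem' := by simp
  mul_mem' {p q} hp hq := (hp.union hq).subset <| by
    rw [← Set.compl_inter]
    exact Set.compl_subset_compl.2 (fixedBy_mul Ω p q)
  inv_mem' {p} hp := by rwa [Set.mem_ofPred_eq, fixedBy_inv]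

variable {Ω : Type*}

lemma mem_finitaryPerms {p : Perm Ω} : p ∈ finitaryPerms Ω ↔ (fixedBy Ω p)ᶜ.Finite := Iff.rfl

instance : (finitaryPerms Ω).Normal where
  conj_mem p hp q := by
    rw [mem_finitaryPerms, ← smul_fixedBy, ← Set.smul_set_compl]
    exact hp.image _

lemma swap_mem_finitaryPerms [DecidableEq Ω] (a b : Ω) : swap a b ∈ finitaryPerms Ω := by
  refine (Set.toFinite {a, b}).subset fun x hx => ?_
  by_contra hab
  simp only [Set.mem_insert_iff, Set.mem_singleton_iff, not_or] at hab
  exact hx (swap_apply_of_ne_of_ne hab.1 hab.2)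

lemma exists_mem_finitaryPerms_eqOn (q : Perm Ω) (S : Finset Ω) :
    ∃ π ∈ finitaryPerms Ω, ∀ x ∈ S, π x = q x := by
  classical
  induction S using Finset.induction_on with
  | empty => exact ⟨1, one_mem _, by simp⟩
  | insert a S ha ih =>
    obtain ⟨π, hπ, hπS⟩ := ih
    refine ⟨π * swap (π.symm (q a)) a, mul_mem hπ (swap_mem_finitaryPerms _ _), ?_⟩
    simp only [Finset.mem_insert, forall_eq_or_imp, Perm.mul_apply, swap_apply_right,
      apply_symm_apply, true_and]
    intro x hx
    have hxa : x ≠ a := ne_of_mem_of_not_mem hx ha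
    have hx' : x ≠ π.symm (q a) := by
      rintro rfl
      exact hxa (q.injective (by rw [← hπS _ hx, apply_symm_apply]))
    rw [swap_apply_of_ne_of_ne hx' hxa, hπS x hx]

namespace FreeGroup

variable {ι κ : Type*}

lemma map_ne_one_of_injOn_s15 [DecidableEq ι] {v : ι → κ} {A : Set ι} {w : FreeGroup ι}
    (hw : w ≠ 1) (hA : ∀ p ∈ w.toWord, p.1 ∈ A) (hv : Set.InjOn v A) : map v w ≠ 1 := by
  obtain ⟨p, hp⟩ := List.exists_mem_of_ne_nil _ (mt toWord_eq_nil_iff.mp hw)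
  have : Nonempty ι := ⟨p.1⟩
  have hleft : map (Function.invFunOn v A) (map v w) = w := calc
    _ = map (Function.invFunOn v A ∘ v) (mk w.toWord) := by rw [map.comp, mk_toWord]
    _ = mk w.toWord := by
      rw [map.mk, List.map_congr_left (g := id) fun q hq => ?_, List.map_id]
      simp [hv.leftInvOn_invFunOn (hA q hq)]
    _ = w := mk_toWord
  intro h
  rw [h, _root_.map_one] at hleft
  exact hw hleft.symm

lemma lift_injective_of_mk_eq {P : Type*} [Group P] {N : Subgroup P} [N.Normal] {g f : ι → P}
    (hg : ∀ w : FreeGroup ι, w ≠ 1 → lift g w ∉ N) (hfg : ∀ i, (f i : P ⧸ N) = g i) :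
    Injective (lift f) := by
  have hmk : (QuotientGroup.mk' N).comp (lift f) = (QuotientGroup.mk' N).comp (lift g) :=
    ext_hom _ _ fun i => by simpa using hfg i
  refine (injective_iff_map_eq_one _).2 fun w hw => not_not.1 fun hne => hg w hne ?_
  rw [← QuotientGroup.eq_one_iff, ← QuotientGroup.mk'_apply, ← MonoidHom.comp_apply, ← hmk,
    MonoidHom.comp_apply, hw, _root_.map_one]

end FreeGroup

open Classical in
lemma exists_finset_injOn_filter_mem [Nonempty Ω] {ι : Type*} {σ : ι → Set Ω}
    (hσ : Injective σ) {A : Set ι} (hA : A.Finite) :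
    ∃ F : Finset Ω, Set.InjOn (fun s => F.filter (· ∈ σ s)) A := by
  have hsep : ∀ s t, ∃ x : Ω, (x ∈ σ s ↔ x ∈ σ t) → s = t := by
    intro s t
    by_cases hst : σ s = σ t
    · exact ⟨Classical.arbitrary Ω, fun _ => hσ hst⟩
    · obtain ⟨x, hx⟩ := not_forall.1 (mt Set.ext hst)
      exact ⟨x, fun h => absurd h hx⟩
  choose sep hsep using hsep
  refine ⟨(hA.prod hA).toFinset.image fun p => sep p.1 p.2, fun s hs t ht hst => hsep s t ?_⟩
  have hmem : sep s t ∈ (hA.prod hA).toFinset.image fun p => sep p.1 p.2 :=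
    Finset.mem_image_of_mem (fun p => sep p.1 p.2) (a := (s, t))
      ((hA.prod hA).mem_toFinset.2 ⟨hs, ht⟩)
  simpa [hmem] using Finset.ext_iff.1 hst (sep s t)

lemma exists_hom_perm_notMem_finitaryPerms {G H D : Type*} [Group G] [Group H] [Infinite H]
    (ρ : D → G →* H) (hρ : ∀ w : G, w ≠ 1 → ∃ d, ρ d w ≠ 1) (emb : D × H ↪ Ω) :
    ∃ Φ : G →* Perm Ω, ∀ w : G, w ≠ 1 → Φ w ∉ finitaryPerms Ω := by
  let e : (Σ _ : D, H) ↪ Ω := (Equiv.sigmaEquivProd D H).toEmbedding.trans emb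
  refine ⟨(Perm.viaEmbeddingHom e).comp ((Perm.sigmaCongrRightHom fun _ => H).comp
    (MonoidHom.pi fun d => (MulAction.toPermHom H H).comp (ρ d))), fun w hw hfin => ?_⟩
  obtain ⟨d, hd⟩ := hρ w hw
  refine Set.infinite_of_injective_forall_mem (f := fun z : H => e ⟨d, z⟩) ?_ (fun z => ?_) hfin
  · exact fun z z' h => eq_of_heq (Sigma.mk.inj (e.injective h)).2
  · rw [Set.mem_compl_iff, mem_fixedBy, Perm.smul_def, MonoidHom.comp_apply,
      Perm.viaEmbeddingHom_apply, Perm.viaEmbedding_apply]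
    simp [hd]

open Classical in
lemma exists_family_lift_notMem_finitaryPerms [Infinite Ω] {ι : Type*} {σ : ι → Set Ω}
    (hσ : Injective σ) :
    ∃ g : ι → Perm Ω, ∀ w : FreeGroup ι, w ≠ 1 → FreeGroup.lift g w ∉ finitaryPerms Ω := by
  let ρ (F : Finset Ω) : FreeGroup ι →* FreeGroup (Finset Ω) :=
    FreeGroup.map fun s => F.filter (· ∈ σ s)
  have hρ : ∀ w : FreeGroup ι, w ≠ 1 → ∃ F, ρ F w ≠ 1 := by
    intro w hw
    obtain ⟨F, hF⟩ := exists_finset_injOn_filter_mem hσ (w.toWord.finite_toSet.image Prod.fst)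
    exact ⟨F, FreeGroup.map_ne_one_of_injOn_s15 hw (fun _ hp => Set.mem_image_of_mem Prod.fst hp) hF⟩
  have hcard : Cardinal.mk (Finset Ω × FreeGroup (Finset Ω)) = Cardinal.mk Ω := by
    simp [Cardinal.mk_finset_of_infinite, Cardinal.mk_freeGroup,
      Cardinal.mul_eq_self (Cardinal.aleph0_le_mk Ω)]
  obtain ⟨Φ, hΦ⟩ :=
    exists_hom_perm_notMem_finitaryPerms ρ hρ (Cardinal.eq.1 hcard).some.toEmbedding
  exact ⟨fun s => Φ (FreeGroup.of s), fun w hw => by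
    rw [← FreeGroup.lift_unique Φ fun _ => rfl]; exact hΦ w hw⟩

lemma exists_finset_eqOn_subset_of_mem_nhds {A B : Type*} [TopologicalSpace B]
    [DiscreteTopology B] {u : A → B} {V : Set (A → B)} (hV : V ∈ 𝓝 u) :
    ∃ S : Finset A, {v | ∀ a ∈ S, v a = u a} ⊆ V := by
  rw [nhds_pi, Filter.mem_pi'] at hV
  obtain ⟨S, t, ht, hsub⟩ := hV
  refine ⟨S, fun v hv => hsub fun a ha => ?_⟩
  rw [hv a ha]
  exact mem_of_mem_nhds (ht a)

section FunctionTopology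

attribute [local instance] permFunctionTopology

lemma exists_finset_eqOn_subset_of_mem_nhds_perm {p : Perm Ω} {V : Set (Perm Ω)}
    (hV : V ∈ 𝓝 p) :
    ∃ S : Finset Ω, {f : Perm Ω | ∀ a ∈ S, f a = p a} ⊆ V := by
  let : TopologicalSpace Ω := ⊥
  have : DiscreteTopology Ω := ⟨rfl⟩
  classical
  unfold permFunctionTopology at hV
  rw [nhds_induced, Filter.mem_comap] at hV
  obtain ⟨W, hW, hWV⟩ := hV
  rw [nhds_prod_eq] at hW
  obtain ⟨W₁, hW₁, W₂, hW₂, hW⟩ := Filter.mem_prod_iff.1 hW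
  obtain ⟨S₁, hS₁⟩ := exists_finset_eqOn_subset_of_mem_nhds hW₁
  obtain ⟨S₂, hS₂⟩ := exists_finset_eqOn_subset_of_mem_nhds hW₂
  refine ⟨S₁ ∪ S₂.image p.symm, fun f hf =>
    hWV (hW ⟨hS₁ fun a ha => ?_, hS₂ fun a ha => ?_⟩)⟩
  · exact hf a (Finset.mem_union_left _ ha)
  · exact (symm_apply_eq f).2 <| by
      simpa using (hf _ (Finset.mem_union_right _ (Finset.mem_image_of_mem p.symm ha))).symm

lemma exists_finset_eqOn_subset_of_mem_nhds_pi_perm {ι : Type*} {h : ι → Perm Ω}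
    {U : Set (ι → Perm Ω)} (hU : U ∈ 𝓝 h) :
    ∃ S : Finset Ω, {f : ι → Perm Ω | ∀ i, ∀ a ∈ S, f i a = h i a} ⊆ U := by
  classical
  rw [nhds_pi, Filter.mem_pi'] at hU
  obtain ⟨I, t, ht, hsub⟩ := hU
  choose S hS using fun i => exists_finset_eqOn_subset_of_mem_nhds_perm (ht i)
  exact ⟨I.biUnion S, fun f hf => hsub fun i hi =>
    hS i fun a ha => hf i a (Finset.mem_biUnion.2 ⟨i, hi, ha⟩)⟩

end FunctionTopology

/-- For any infinite set `Ω`, the group `Sym(Ω)` of all permutations of `Ω`, with the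
function topology, is almost `2^|Ω|`-free. -/
theorem stmt_15 (Ω : Type u) [Infinite Ω] :
    @AlmostFree (Equiv.Perm Ω) _ (permFunctionTopology Ω) (2 ^ Cardinal.mk Ω) := by
  let := permFunctionTopology Ω
  intro ι hι
  obtain ⟨σ⟩ : Nonempty (ι ≃ Set Ω) := Cardinal.eq.1 (by rw [hι, Cardinal.mk_set])
  obtain ⟨g, hg⟩ := exists_family_lift_notMem_finitaryPerms σ.injective
  refine dense_iff_inter_open.2 fun U hU ⟨h, hhU⟩ => ?_
  obtain ⟨S, hS⟩ := exists_finset_eqOn_subset_of_mem_nhds_pi_perm (hU.mem_nhds hhU)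
  choose π hπ hπS using fun i => exists_mem_finitaryPerms_eqOn ((g i)⁻¹ * h i) S
  refine ⟨fun i => g i * π i, hS fun i a ha => ?_,
    FreeGroup.lift_injective_of_mk_eq hg fun i => ?_⟩
  · simp [hπS i a ha]
  · simpa [QuotientGroup.eq] using hπ i
end

section
/- Let n be a positive integer and let w be a nonidentity element of the free group on n generators. Then there exist a positive integer m and permutations f_1, …, f_n in the symmetric group S_m = Sym(Fin m) such that the image of w under the homomorphism FreeGroup (Fin n) → S_m sending the i-th generator to f_i is not the identity. -/
/-!
Read a reduced word `L` of length `k` as a path through the points `0, 1, …, k`, its `i`-th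
letter `x^{±1}` being an edge between `i` and `i + 1`. For each generator `x`, the `x`-edges,
oriented by the signs, form a partial injection of `{0, …, k}`: two edges that would collide
come from adjacent letters `x^{±1} x^{∓1}`, which a reduced word does not contain. Extending
these partial injections to permutations gives an action in which `w` moves `k` to `0`.
-/

theorem Relator.exists_perm_of_leftUnique_of_rightUnique {α : Type*} [Finite α]
    {R : α → α → Prop} (hl : Relator.LeftUnique R) (hr : Relator.RightUnique R) :
    ∃ σ : Equiv.Perm α, ∀ a b, R a b → σ a = b := by
  classical
  have := Fintype.ofFinite α
  let f : α → α := fun a => if h : ∃ b, R a b then h.choose else a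
  have hf : ∀ a b, R a b → f a = b := fun a b hab => by
    have h : ∃ b, R a b := ⟨b, hab⟩
    simp only [f, dif_pos h]
    exact hr h.choose_spec hab
  have hinj : Set.InjOn f {a | ∃ b, R a b} := by
    rintro a ⟨b, hab⟩ a' ⟨b', hab'⟩ h
    rw [hf a b hab, hf a' b' hab'] at h
    subst h
    exact hl hab hab'
  obtain ⟨g, hg⟩ := Set.MapsTo.exists_equiv_extend_of_card_eq (t := Finset.univ)
    (by simp) (fun a _ => Finset.mem_coe.2 (Finset.mem_univ (f a))) hinj
  exact ⟨g.trans (Equiv.subtypeUnivEquiv Finset.mem_univ),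
    fun a b hab => (hg a ⟨b, hab⟩).trans (hf a b hab)⟩

theorem List.prod_smul_eq_of_getElem_smul {M α : Type*} [Monoid M] [MulAction M α]
    (l : List M) (p : ℕ → α) (h : ∀ i (hi : i < l.length), l[i] • p (i + 1) = p i) :
    l.prod • p l.length = p 0 := by
  induction l generalizing p with
  | nil => simp
  | cons π t ih =>
    rw [List.prod_cons, mul_smul, List.length_cons,
      ih (fun i => p (i + 1)) fun i hi => h (i + 1) (by simpa using hi)]
    exact h 0 (by simp)

namespace FreeGroup

variable {α : Type*}

/-- The constraints `σ_x a = b` forced by asking every letter `x^{±1}` at position `i` of `L` to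
send `i + 1` to `i`. -/
def PathRel (L : List (α × Bool)) (x : α) (a b : ℕ) : Prop :=
  ∃ i, ∃ hi : i < L.length, L[i].1 = x ∧
    if L[i].2 then a = i + 1 ∧ b = i else a = i ∧ b = i + 1

theorem IsReduced.pathRel_rightUnique {L : List (α × Bool)} (hL : IsReduced L) (x : α) :
    Relator.RightUnique (PathRel L x) := by
  rintro a b c ⟨i, hi, rfl, hab⟩ ⟨j, hj, hx, hac⟩
  split_ifs at hab hac with hbi hbj hbj
  · omega
  · obtain rfl : j = i + 1 := by omega
    exact absurd ((hL.getElem i hj hx.symm).symm.trans hbi) hbj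
  · obtain rfl : i = j + 1 := by omega
    exact absurd ((hL.getElem j hi hx).symm.trans hbj) hbi
  · omega

theorem IsReduced.pathRel_leftUnique {L : List (α × Bool)} (hL : IsReduced L) (x : α) :
    Relator.LeftUnique (PathRel L x) := by
  rintro a b c ⟨i, hi, rfl, hac⟩ ⟨j, hj, hx, hbc⟩
  split_ifs at hac hbc with hbi hbj hbj
  · omega
  · obtain rfl : i = j + 1 := by omega
    exact absurd ((hL.getElem j hi hx).trans hbi) hbj
  · obtain rfl : j = i + 1 := by omega
    exact absurd ((hL.getElem i hj hx.symm).trans hbj) hbi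
  · omega

theorem exists_perm_lift_ne_one [DecidableEq α] {w : FreeGroup α} (hw : w ≠ 1) :
    ∃ f : α → Equiv.Perm (Fin (w.toWord.length + 1)), lift f w ≠ 1 := by
  set L := w.toWord
  have hσ (x : α) : ∃ σ : Equiv.Perm (Fin (L.length + 1)),
      ∀ a b : Fin (L.length + 1), PathRel L x a b → σ a = b :=
    Relator.exists_perm_of_leftUnique_of_rightUnique
      (fun _ _ _ h h' => Fin.ext (isReduced_toWord.pathRel_leftUnique x h h'))
      (fun _ _ _ h h' => Fin.ext (isReduced_toWord.pathRel_rightUnique x h h'))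
  choose σ hσ using hσ
  refine ⟨σ, fun h => ?_⟩
  have hpath := List.prod_smul_eq_of_getElem_smul
    (L.map fun y => bif y.2 then σ y.1 else (σ y.1)⁻¹) (Fin.ofNat (L.length + 1)) fun i hi => ?_
  · rw [← lift_mk, mk_toWord, h, one_smul, List.length_map] at hpath
    have hlen : L.length = 0 := by simpa [Fin.ext_iff, Fin.val_ofNat] using hpath
    exact hw (toWord_eq_nil_iff.mp (List.length_eq_zero_iff.mp hlen))
  · rw [List.length_map] at hi
    rw [List.getElem_map, Equiv.Perm.smul_def]
    cases hb : L[i].2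
    · rw [cond_false, Equiv.Perm.inv_eq_iff_eq]
      refine (hσ _ _ _ ⟨i, hi, rfl, ?_⟩).symm
      simp [hb, hi, hi.le]
    · rw [cond_true]
      refine hσ _ _ _ ⟨i, hi, rfl, ?_⟩
      simp [hb, hi, hi.le]

end FreeGroup

theorem stmt_16_general (n : ℕ) (w : FreeGroup (Fin n)) (hw : w ≠ 1) :
    ∃ (m : ℕ), 0 < m ∧ ∃ f : Fin n → Equiv.Perm (Fin m),
      FreeGroup.lift f w ≠ 1 :=
  ⟨_, Nat.succ_pos _, FreeGroup.exists_perm_lift_ne_one hw⟩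

/-- For every nonidentity element `w` of the free group on `n ≥ 1` generators, there are
a positive integer `m` and permutations `f_1, …, f_n ∈ Sym(Fin m)` such that the image of
`w` under the induced homomorphism `FreeGroup (Fin n) →* Sym(Fin m)` is not the
identity. -/
theorem stmt_16 (n : ℕ) (hn : 0 < n) (w : FreeGroup (Fin n)) (hw : w ≠ 1) :
    ∃ (m : ℕ), 0 < m ∧ ∃ f : Fin n → Equiv.Perm (Fin m),
      FreeGroup.lift f w ≠ 1 :=
  stmt_16_general n w hw
end

section
/- Let ι be an infinite type, let φ : ι → ℕ be a function with φ(i) ≥ 1 for all i, and suppose that for every positive integer l the set {i ∈ ι : φ(i) ≥ l} has the same cardinality as ι. Then the product group G = ∏_{i∈ι} Sym(Fin (φ i)) contains a free subgroup of rank |ι|: there is a map f : ι → G such that the induced homomorphism FreeGroup ι → G is injective. -/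
/-!
Write a nontrivial `w` as a word `L`. Left multiplication by each generator, restricted to the
finite set of suffixes of `L` (as elements of the free group) and extended arbitrarily to a
permutation of that set, defines an action of the free group in which `w` sends `1` to `w`.
So every `w ≠ 1` survives in a homomorphism to `Sym(m)` for all `m ≥ n_w`. Since
`#(FreeGroup ι) = #ι` and every set `{i | n_w < φ i}` has cardinality `#ι`, a transfinite greedy
choice assigns to the nontrivial elements `w` pairwise distinct coordinates `i_w` with
`n_w ≤ φ i_w`; placing the homomorphism detecting `w` in coordinate `i_w` gives an injective
homomorphism into the product.
-/

universe u v w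

open Cardinal Equiv Function

theorem exists_injective_forall_mem {α : Type v} {β : Type w} (N : β → Set α)
    (hN : ∀ b, lift.{v} #β ≤ lift.{w} #(N b)) :
    ∃ θ : β → α, Injective θ ∧ ∀ b, θ b ∈ N b := by
  -- every initial segment of this well-order has fewer than `#β` elements
  obtain ⟨_, _, hβ⟩ := exists_ord_eq_type_lt β
  have avoid : ∀ b (prev : Set.Iio b → α), (N b \ Set.range prev).Nonempty := by
    intro b prev
    rw [Set.sdiff_nonempty]
    intro hsub
    have := (lift_le.2 (mk_le_mk_of_subset hsub)).trans (mk_range_le_lift (f := prev))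
    exact ((hN b).trans this).not_gt (lift_lt.2 (mk_Iio_lt b hβ))
  let θ : β → α := wellFounded_lt.fix fun b prev => (avoid b fun c => prev c c.2).some
  have hθ : ∀ b, θ b ∈ N b \ Set.range fun c : Set.Iio b => θ c := fun b => by
    rw [show θ b = _ from wellFounded_lt.fix_eq _ b]
    exact (avoid b _).some_mem
  refine ⟨θ, fun b c hbc => ?_, fun b => (hθ b).1⟩
  by_contra hne
  rcases lt_or_gt_of_ne hne with h | h
  · exact (hθ c).2 ⟨⟨b, h⟩, hbc⟩
  · exact (hθ b).2 ⟨⟨c, h⟩, hbc.symm⟩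

namespace Finset

variable {G : Type*} [Group G] (P : Finset G) (g : G)

open scoped Classical in
noncomputable def leftMulPerm : Perm P :=
  extendSubtype (p := fun x : P => g * x ∈ P) (q := fun y : P => g⁻¹ * y ∈ P)
    { toFun := fun x => ⟨⟨g * x, x.2⟩, by simp⟩
      invFun := fun y => ⟨⟨g⁻¹ * y, y.2⟩, by simp⟩
      left_inv := fun x => by simp
      right_inv := fun y => by simp }

variable {P g}

theorem leftMulPerm_apply {x : P} (hx : g * x ∈ P) : (leftMulPerm P g x : G) = g * x := by
  classical
  rw [leftMulPerm, extendSubtype_apply_of_mem _ x hx]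
  rfl

theorem leftMulPerm_inv_apply {y : P} (hy : g⁻¹ * y ∈ P) :
    ((leftMulPerm P g)⁻¹ y : G) = g⁻¹ * y := by
  have h : leftMulPerm P g ⟨g⁻¹ * y, hy⟩ = y :=
    Subtype.ext <| (leftMulPerm_apply (by simp)).trans (mul_inv_cancel_left g y)
  rw [Perm.inv_eq_iff_eq.2 h.symm]

end Finset

theorem exists_monoidHom_perm_fin_apply_ne_one {G α : Type*} [Group G] [Fintype α]
    {ρ : G →* Perm α} {g : G} (hg : ρ g ≠ 1) {m : ℕ} (hm : Fintype.card α ≤ m) :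
    ∃ ρ' : G →* Perm (Fin m), ρ' g ≠ 1 := by
  obtain ⟨e⟩ := Function.Embedding.nonempty_of_card_le (hm.trans_eq (Fintype.card_fin m).symm)
  exact ⟨(Perm.viaEmbeddingHom e).comp ρ,
    fun h => hg (Perm.viaEmbeddingHom_injective e (by simpa using h))⟩

namespace FreeGroup

variable {ι : Type*}

theorem mk_cons (a : ι) (b : Bool) (L : List (ι × Bool)) :
    mk ((a, b) :: L) = cond b (of a) (of a)⁻¹ * mk L := by
  cases b <;> simp [of, inv_mk, invRev, mul_mk]

theorem lift_leftMulPerm_mk_apply {P : Finset (FreeGroup ι)} {L : List (ι × Bool)}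
    (hP : ∀ t ∈ L.tails, mk t ∈ P) (x : P) (hx : (x : FreeGroup ι) = 1) :
    (lift (fun a => P.leftMulPerm (of a)) (mk L) x : FreeGroup ι) = mk L := by
  induction L with
  | nil => simpa [← one_eq_mk] using hx
  | cons l L ih =>
    obtain ⟨a, b⟩ := l
    have hcons : mk ((a, b) :: L) ∈ P := hP _ (by simp)
    rw [mk_cons] at hcons ⊢
    rw [_root_.map_mul, Perm.mul_apply]
    set y := lift (fun a => P.leftMulPerm (of a)) (mk L) x
    have hy : (y : FreeGroup ι) = mk L := ih (fun t ht => hP t (by simp [ht]))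
    cases b
    · rw [cond_false] at hcons ⊢
      rw [_root_.map_inv, lift_apply_of, Finset.leftMulPerm_inv_apply (by rwa [hy]), hy]
    · rw [cond_true] at hcons ⊢
      rw [lift_apply_of, Finset.leftMulPerm_apply (by rwa [hy]), hy]

theorem exists_monoidHom_perm_fin_ne_one {w : FreeGroup ι} (hw : w ≠ 1) :
    ∃ n, ∀ m, n ≤ m → ∃ ρ : FreeGroup ι →* Perm (Fin m), ρ w ≠ 1 := by
  classical
  obtain ⟨L, rfl⟩ : ∃ L, mk L = w := ⟨w.toWord, mk_toWord⟩
  let P := (L.tails.map mk).toFinset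
  have hP : ∀ t ∈ L.tails, mk t ∈ P := fun t ht => List.mem_toFinset.2 (List.mem_map_of_mem ht)
  have h1 : (1 : FreeGroup ι) ∈ P := hP [] (by simp)
  have hρ : lift (fun a => P.leftMulPerm (of a)) (mk L) ≠ 1 := fun h => hw <| by
    simpa [h] using (lift_leftMulPerm_mk_apply hP ⟨1, h1⟩ rfl).symm
  exact ⟨Fintype.card P, fun m hm => exists_monoidHom_perm_fin_apply_ne_one hρ hm⟩

end FreeGroup

theorem exists_injective_monoidHom_pi {G ι : Type*} [Group G] {H : ι → Type*}
    [∀ i, Group (H i)] {θ : {g : G // g ≠ 1} → ι} (hθ : Injective θ)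
    (hsep : ∀ g, ∃ ρ : G →* H (θ g), ρ g ≠ 1) :
    ∃ F : G →* ∀ i, H i, Injective F := by
  have hρ : ∀ i, ∃ ρ : G →* H i, ∀ g, θ g = i → ρ g ≠ 1 := by
    intro i
    by_cases hi : ∃ g, θ g = i
    · obtain ⟨g, rfl⟩ := hi
      obtain ⟨ρ, hρ⟩ := hsep g
      exact ⟨ρ, fun g' hg' => hθ hg' ▸ hρ⟩
    · exact ⟨1, fun g hg => (hi ⟨g, hg⟩).elim⟩
  choose ρ hρ using hρ
  refine ⟨MonoidHom.pi ρ, (injective_iff_map_eq_one _).2 fun g hg => ?_⟩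
  by_contra hne
  exact hρ _ ⟨g, hne⟩ rfl (congrFun hg _)

theorem stmt_17_general (ι : Type u) [Infinite ι] (φ : ι → ℕ)
    (hφ : ∀ l : ℕ, 0 < l → Cardinal.mk {i : ι // l ≤ φ i} = Cardinal.mk ι) :
    ∃ f : ι → (∀ i, Equiv.Perm (Fin (φ i))),
      Function.Injective (FreeGroup.lift f) := by
  choose n hn using fun w : {w : FreeGroup ι // w ≠ 1} =>
    FreeGroup.exists_monoidHom_perm_fin_ne_one w.2
  have hcard : ∀ w, lift.{u} #{w : FreeGroup ι // w ≠ 1} ≤ lift.{u} #{i | n w + 1 ≤ φ i} := by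
    intro w
    rw [lift_le]
    calc #{w : FreeGroup ι // w ≠ 1} ≤ #(FreeGroup ι) := mk_subtype_le _
      _ = #ι := by rw [mk_freeGroup, max_eq_left (aleph0_le_mk ι)]
      _ = #{i | n w + 1 ≤ φ i} := (hφ _ (n w).succ_pos).symm
  obtain ⟨θ, hθ, hθN⟩ := exists_injective_forall_mem _ hcard
  obtain ⟨F, hF⟩ := exists_injective_monoidHom_pi (H := fun i => Perm (Fin (φ i))) hθ
    fun w => hn w _ (Nat.le_of_succ_le (hθN w))
  exact ⟨FreeGroup.lift.symm F, by rwa [FreeGroup.lift.apply_symm_apply]⟩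

/-- Let `ι` be infinite and `φ : ι → ℕ` take positive values, with
`#{i : φ i ≥ l} = #ι` for every positive integer `l`. Then the product group
`∏ i, Sym(Fin (φ i))` contains a free subgroup of rank `#ι`. -/
theorem stmt_17 (ι : Type u) [Infinite ι] (φ : ι → ℕ) (hφ1 : ∀ i, 1 ≤ φ i)
    (hφ : ∀ l : ℕ, 0 < l → Cardinal.mk {i : ι // l ≤ φ i} = Cardinal.mk ι) :
    ∃ f : ι → (∀ i, Equiv.Perm (Fin (φ i))),
      Function.Injective (FreeGroup.lift f) :=
  stmt_17_general ι φ hφ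
end

section
/- Let F be the free group on countably many generators and let κ be an infinite cardinal. Then the direct product F^κ contains a free subgroup of rank 2^κ: for any type ι of cardinality κ there is a type σ of cardinality 2^κ and a map f : σ → (ι → F) such that the induced homomorphism FreeGroup σ → ∏_{i∈ι} F is injective. -/
universe u

/-!
Take `σ = ι → Bool` and index the coordinates of `F^ι` by the finite subsets `A ⊆ ι` (there are
`#ι` of them). At coordinate `A`, send the generator `s` to a free generator of `F` encoding the
restriction of `s` to `A`. A nontrivial word involves finitely many generators, and some finite
`A` separates them; projecting to coordinate `A` then turns the word into the same word in
distinct free generators of `F`, which is nontrivial.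
-/

open Function

namespace FreeGroup

variable {α β G : Type*} [Group G]

theorem exists_finset_eq_map_subtypeVal (w : FreeGroup α) :
    ∃ (T : Finset α) (w' : FreeGroup T), map Subtype.val w' = w := by
  classical
  rcases w with ⟨L⟩
  refine ⟨(L.map Prod.fst).toFinset,
    mk (L.attach.map fun p => (⟨p.1.1, List.mem_toFinset.mpr (List.mem_map_of_mem p.2)⟩, p.1.2)),
    ?_⟩
  rw [quot_mk_eq_mk, map.mk]
  congr 1
  simpa [List.map_map, comp_def] using List.attach_map_subtype_val L

theorem lift_map (g : α → β) (f : β → G) (w : FreeGroup α) :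
    lift f (map g w) = lift (f ∘ g) w := by
  induction w using FreeGroup.induction_on <;> simp_all

theorem injective_lift_of_forall_finset {f : α → G}
    (hf : ∀ T : Finset α, Injective (lift fun t : T => f t)) : Injective (lift f) := by
  rw [injective_iff_map_eq_one]
  intro w hw
  obtain ⟨T, w, rfl⟩ := exists_finset_eq_map_subtypeVal w
  rw [lift_map] at hw
  rw [(injective_iff_map_eq_one _).mp (hf T) w hw, MonoidHom.map_one]

end FreeGroup

theorem Finset.exists_injOn_restrict {ι β : Type*} (T : Finset (ι → β)) :
    ∃ A : Finset ι, Set.InjOn A.restrict (T : Set (ι → β)) := by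
  classical
  choose d hd using fun p : T.offDiag => ne_iff.mp (mem_offDiag.mp p.2).2.2
  refine ⟨univ.image d, fun s hs t ht hst => ?_⟩
  by_contra hne
  let p : T.offDiag := ⟨(s, t), mem_offDiag.mpr ⟨hs, ht, hne⟩⟩
  exact hd p (congrFun hst ⟨d p, mem_image_of_mem d (mem_univ p)⟩)

theorem exists_injective_lift_pi_freeGroup_nat (ι β : Type*) [Infinite ι] [Countable β] :
    ∃ f : (ι → β) → (ι → FreeGroup ℕ), Injective (FreeGroup.lift f) := by
  obtain ⟨e⟩ : Nonempty (Finset ι ≃ ι) := Cardinal.eq.mp (Cardinal.mk_finset_of_infinite ι)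
  choose enc henc using fun A : Finset ι => Countable.exists_injective_nat (A → β)
  let f (s : ι → β) (i : ι) : FreeGroup ℕ := .of (enc (e.symm i) ((e.symm i).restrict s))
  refine ⟨f, FreeGroup.injective_lift_of_forall_finset fun T => ?_⟩
  obtain ⟨A, hA⟩ := T.exists_injOn_restrict
  obtain ⟨i, rfl⟩ := e.symm.surjective A
  let π := Pi.evalMonoidHom (fun _ : ι => FreeGroup ℕ) i
  have hcoord : π.comp (FreeGroup.lift fun t : T => f t) =
      FreeGroup.map fun t : T => enc (e.symm i) ((e.symm i).restrict t.1) := by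
    ext
    simp [π, f]
  refine Injective.of_comp (f := π) ?_
  rw [← MonoidHom.coe_comp, hcoord]
  exact FreeGroup.map_injective ((henc _).comp hA.injective)

/-- (Bergman) Let `F = FreeGroup ℕ` be the free group on countably many generators and
let `κ = #ι` be an infinite cardinal. Then the direct product `F^κ = (ι → F)` contains a
free subgroup of rank `2^κ`. -/
theorem stmt_18 (κ : Cardinal.{u}) (hκ : Cardinal.aleph0 ≤ κ)
    (ι : Type u) (hι : Cardinal.mk ι = κ) :
    ∃ (σ : Type u) (f : σ → (ι → FreeGroup ℕ)),
      Cardinal.mk σ = 2 ^ κ ∧ Function.Injective (FreeGroup.lift f) := by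
  subst hι
  have : Infinite ι := Cardinal.infinite_iff.mpr hκ
  obtain ⟨f, hf⟩ := exists_injective_lift_pi_freeGroup_nat ι Bool
  exact ⟨ι → Bool, f, by simp, hf⟩
end

section
/- Let ι be an infinite type, let φ : ι → ℕ be a function with φ(i) ≥ 1 for all i, and suppose that for every positive integer l the set {i ∈ ι : φ(i) ≥ l} has the same cardinality as ι. Endow G = ∏_{i∈ι} Sym(Fin (φ i)) with the product topology arising from the discrete topology on each factor Sym(Fin (φ i)). Then G contains a dense free subgroup of rank 2^|ι|: there is a type σ of cardinality 2^|ι| and a map f : σ → G such that the induced homomorphism FreeGroup σ → G is injective and the image subgroup is dense. In particular, G is almost 2^|ι|-free. -/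
universe u v

/-!
Index the generators by the subsets `X ⊆ ι`. A code `(m, e, ψ)` consists of a finite `e ⊆ ι` and
an assignment `ψ` of a permutation of `Fin m` to each subset of `e`; there are only `#ι` codes, so
the hypothesis on `φ` lets every code sit at infinitely many coordinates `i` with `m ≤ φ i`, where
`X` acts by `ψ (X ∩ e)`. A nontrivial word survives some assignment of permutations of a finite
set to its letters (residual finiteness of free groups), and that assignment factors through the
traces of the letters on a finite `e`; so the word is nontrivial at infinitely many coordinates.
Hence freeness is unaffected by changing each generator at finitely many coordinates, which is all
that density in the product topology asks for. For the dense free subgroup, the `2 ^ #ι`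
generators are modified so that each realizes one of the `2 ^ #ι` finite patterns.
-/

open Cardinal Function Topology

theorem exists_injective_forall_mem_of_mk_le {β ι : Type u} (S : β → Set ι) (hβ : #β ≤ #ι)
    (hS : ∀ b, #(S b) = #ι) : ∃ f : β → ι, Injective f ∧ ∀ b, f b ∈ S b := by
  obtain ⟨r, hr, hord⟩ := exists_ord_eq β
  -- Along a well-order of minimal type, fewer than `#β ≤ #ι` values precede each step.
  have hfresh : ∀ b (prev : ∀ b', r b' b → ι),
      (S b \ Set.range fun b' : {b' // r b' b} => prev b' b'.2).Nonempty := by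
    intro b prev
    by_contra h
    rw [Set.not_nonempty_iff_eq_empty, Set.sdiff_eq_empty] at h
    have hle := (hS b).symm.le.trans ((mk_le_mk_of_subset h).trans mk_range_le)
    exact (card_typein_lt b hord).not_ge (hβ.trans hle)
  let f : β → ι := hr.wf.fix fun b prev => (hfresh b prev).some
  have hf : ∀ b, f b ∈ S b \ Set.range fun b' : {b' // r b' b} => f b' := fun b => by
    rw [show f b = _ from hr.wf.fix_eq _ b]
    exact (hfresh b fun b' _ => f b').some_mem
  refine ⟨f, fun b b' h => ?_, fun b => (hf b).1⟩
  obtain hbb' | rfl | hb'b := trichotomous_of r b b'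
  · exact absurd ⟨⟨b, hbb'⟩, h⟩ (hf b').2
  · rfl
  · exact absurd ⟨⟨b', hb'b⟩, h.symm⟩ (hf b).2

theorem exists_forall_rel_and_infinite_fiber {C ι : Type u} [Infinite ι] (R : C → ι → Prop)
    (hC : #C ≤ #ι) (hR : ∀ c, #{i // R c i} = #ι) (c₀ : C) (hc₀ : ∀ i, R c₀ i) :
    ∃ code : ι → C, (∀ i, R (code i) i) ∧ ∀ c, {i | code i = c}.Infinite := by
  have hCℕ : #(C × ℕ) ≤ #ι := by
    rw [mk_prod, lift_uzero, mk_nat, lift_aleph0]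
    exact mul_le_of_le (aleph0_le_mk ι) hC (aleph0_le_mk ι)
  obtain ⟨θ, hθ, hθR⟩ :=
    exists_injective_forall_mem_of_mk_le (fun p : C × ℕ => {i | R p.1 i}) hCℕ fun p => hR p.1
  refine ⟨extend θ Prod.fst fun _ => c₀, fun i => ?_, fun c => ?_⟩
  · by_cases h : ∃ p, θ p = i
    · obtain ⟨p, rfl⟩ := h
      rw [hθ.extend_apply]
      exact hθR p
    · rw [extend_apply' _ _ _ h]
      exact hc₀ i
  · refine Set.infinite_of_injective_forall_mem (f := fun n : ℕ => θ (c, n)) ?_ fun n => ?_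
    · exact fun n n' h => (Prod.ext_iff.1 (hθ h)).2
    · exact hθ.extend_apply _ _ (c, n)

theorem Set.Finite.exists_finset_injOn_preimage_val {ι : Type*} {S : Set (Set ι)}
    (hS : S.Finite) : ∃ e : Finset ι, S.InjOn fun X => ((↑) : e → ι) ⁻¹' X := by
  classical
  have hsep : ∀ X Y : Set ι, ∃ t : Finset ι, X ≠ Y → ∃ j ∈ t, ¬(j ∈ X ↔ j ∈ Y) := by
    intro X Y
    by_cases h : X = Y
    · exact ⟨∅, fun h' => absurd h h'⟩
    · obtain ⟨j, hj⟩ := not_forall.1 (mt Set.ext h)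
      exact ⟨{j}, fun _ => ⟨j, Finset.mem_singleton_self j, hj⟩⟩
  choose t ht using hsep
  refine ⟨hS.toFinset.biUnion fun X => hS.toFinset.biUnion (t X),
    fun X hX Y hY hXY => by_contra fun hne => ?_⟩
  obtain ⟨j, hj, hjXY⟩ := ht X Y hne
  have hje : j ∈ hS.toFinset.biUnion fun X => hS.toFinset.biUnion (t X) := by
    simp only [Finset.mem_biUnion, Set.Finite.mem_toFinset]
    exact ⟨X, hX, Y, hY, hj⟩
  exact hjXY (Set.ext_iff.1 hXY ⟨j, hje⟩)

theorem exists_perm_coe_eq_mul_of_mul_mem {Γ : Type*} [Group Γ] [DecidableEq Γ] (D : Finset Γ)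
    (g : Γ) : ∃ σ : Equiv.Perm D, ∀ u : D, g * u ∈ D → (σ u : Γ) = g * u :=
  Set.MapsTo.exists_equiv_extend_of_card_eq (Fintype.card_coe D) (fun _ hu => hu)
    fun _ _ _ _ h => Subtype.ext (mul_left_cancel h)

theorem MonoidHom.map_freeGroupLift {α G H : Type*} [Group G] [Group H] (h : G →* H)
    (f : α → G) (W : FreeGroup α) : h (FreeGroup.lift f W) = FreeGroup.lift (h ∘ f) W :=
  FreeGroup.lift_unique (h.comp (FreeGroup.lift f)) (by simp)

namespace FreeGroup

variable {α : Type*}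

theorem lift_eq_of_forall_mem_toWord [DecidableEq α] {G : Type*} [Group G] {f f' : α → G}
    {W : FreeGroup α} (h : ∀ x ∈ W.toWord, f x.1 = f' x.1) : lift f W = lift f' W := by
  rw [← mk_toWord (x := W), lift_mk, lift_mk]
  exact congrArg List.prod (List.map_congr_left fun x hx => by rw [h x hx])

/-- Residual finiteness: the generators act on the finite set of suffixes of the reduced word of
`W` by partial left translations, and any extension of these to permutations carries `1` to `W`. -/
theorem exists_perm_lift_ne_one_s19 {W : FreeGroup α} (hW : W ≠ 1) :
    ∃ (m : ℕ) (π : α → Equiv.Perm (Fin m)), lift π W ≠ 1 := by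
  classical
  let D : Finset (FreeGroup α) := (W.toWord.tails.map mk).toFinset
  have hD : ∀ L, L <:+ W.toWord → mk L ∈ D := fun L hL =>
    List.mem_toFinset.2 (List.mem_map_of_mem ((List.mem_tails _ _).2 hL))
  choose σ hσ using fun a => exists_perm_coe_eq_mul_of_mul_mem D (of a)
  have hwalk : ∀ L (hL : L <:+ W.toWord),
      (lift σ (mk L) ⟨1, hD [] List.nil_suffix⟩ : FreeGroup α) = mk L := by
    intro L
    induction L with
    | nil => intro _; rfl
    | cons x L ih =>
      intro hL
      have hL' : L <:+ W.toWord := (List.suffix_cons x L).trans hL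
      have hx : mk (x :: L) = mk [x] * mk L := by rw [mul_mk]; rfl
      rw [hx, _root_.map_mul, Equiv.Perm.mul_apply, show lift σ (mk L) _ = ⟨mk L, hD L hL'⟩ from
        Subtype.ext (ih hL')]
      obtain ⟨a, _ | _⟩ := x
      · have hinv : mk [(a, false)] = (of a)⁻¹ := rfl
        have hu : (of a)⁻¹ * mk L ∈ D := by rw [← hinv, ← hx]; exact hD _ hL
        have hσu : σ a ⟨_, hu⟩ = ⟨mk L, hD L hL'⟩ := Subtype.ext <| by
          rw [hσ a _ (by simpa using hD L hL'), mul_inv_cancel_left]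
        rw [hinv, _root_.map_inv, lift_apply_of, Equiv.Perm.inv_eq_iff_eq.2 hσu.symm]
      · exact hσ a _ (hx ▸ hD _ hL)
  have hσW := hwalk _ List.suffix_rfl
  rw [mk_toWord] at hσW
  refine ⟨_, (Fintype.equivFin D).permCongrHom.toMonoidHom ∘ σ, ?_⟩
  rw [← MonoidHom.map_freeGroupLift, MulEquiv.coe_toMonoidHom,
    map_ne_one_iff _ (MulEquiv.injective _)]
  exact fun h => hW (by simpa [h] using hσW.symm)

end FreeGroup

section RobustlyFree

variable {σ ι : Type*} {H : ι → Type*} [∀ i, Group (H i)]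

/-- The form of freeness that survives changing each generator at finitely many coordinates. -/
def IsRobustlyFree (g : σ → ∀ i, H i) : Prop :=
  ∀ W : FreeGroup σ, W ≠ 1 → {i | FreeGroup.lift (fun s => g s i) W ≠ 1}.Infinite

theorem FreeGroup.lift_apply_pi (g : σ → ∀ i, H i) (W : FreeGroup σ) (i : ι) :
    FreeGroup.lift g W i = FreeGroup.lift (fun s => g s i) W :=
  (Pi.evalMonoidHom H i).map_freeGroupLift g W

namespace IsRobustlyFree

variable {g : σ → ∀ i, H i}

theorem injective_lift (hg : IsRobustlyFree g) : Injective (FreeGroup.lift g) := by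
  refine (injective_iff_map_eq_one _).2 fun W hW => by_contra fun hne => ?_
  obtain ⟨i, hi⟩ := (hg W hne).nonempty
  exact hi (by rw [← FreeGroup.lift_apply_pi, hW, Pi.one_apply])

theorem of_finite_ne (hg : IsRobustlyFree g) {g' : σ → ∀ i, H i}
    (h : ∀ s, {i | g' s i ≠ g s i}.Finite) : IsRobustlyFree g' := by
  classical
  intro W hW
  have hbad : (⋃ x ∈ W.toWord, {i | g' x.1 i ≠ g x.1 i}).Finite :=
    (W.toWord.finite_toSet).biUnion fun x _ => h x.1
  refine ((hg W hW).sdiff hbad).mono fun i hi => ?_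
  obtain ⟨hi, hgood⟩ := hi
  simp only [Set.mem_iUnion, Set.mem_ofPred_eq, not_exists, not_not] at hgood
  exact (FreeGroup.lift_eq_of_forall_mem_toWord (f' := fun s => g s i) hgood).trans_ne hi

theorem piecewise (hg : IsRobustlyFree g) (F : σ → Finset ι) (x : σ → ∀ i, H i)
    [∀ s, DecidablePred (· ∈ F s)] : IsRobustlyFree fun s => (F s).piecewise (x s) (g s) :=
  hg.of_finite_ne fun s => (F s).finite_toSet.subset fun _ hi =>
    by_contra fun hiF => hi ((F s).piecewise_eq_of_notMem _ _ hiF)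

theorem comp_injective (hg : IsRobustlyFree g) {τ : Type*} {e : τ → σ} (he : Injective e) :
    IsRobustlyFree (g ∘ e) := by
  intro W hW
  have hmap : ∀ i, FreeGroup.lift (fun t => g (e t) i) W =
      FreeGroup.lift (fun s => g s i) (FreeGroup.map e W) := fun i =>
    (FreeGroup.lift_unique ((FreeGroup.lift fun s => g s i).comp (FreeGroup.map e)) (by simp)).symm
  simpa only [Function.comp_apply, hmap] using
    hg _ ((map_ne_one_iff _ (FreeGroup.map_injective he)).2 hW)

theorem exists_forall_finset_exists_eqOn (hg : IsRobustlyFree g) {p : σ → Finset ι × ∀ i, H i}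
    (hp : Surjective p) : ∃ g' : σ → ∀ i, H i, IsRobustlyFree g' ∧
      ∀ (F : Finset ι) (x : ∀ i, H i), ∃ s, ∀ i ∈ F, g' s i = x i := by
  classical
  refine ⟨_, hg.piecewise (fun s => (p s).1) fun s => (p s).2, fun F x => ?_⟩
  obtain ⟨s, hs⟩ := hp (F, x)
  exact ⟨s, fun i hi => by simp [hs, hi]⟩

end IsRobustlyFree

end RobustlyFree

section ProductTopology

variable {ι : Type*} {H : ι → Type*} [∀ i, TopologicalSpace (H i)]

theorem exists_finset_eqOn_subset_of_mem_nhds_s19 {x : ∀ i, H i} {U : Set (∀ i, H i)}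
    (hU : U ∈ 𝓝 x) : ∃ F : Finset ι, {y | ∀ i ∈ F, y i = x i} ⊆ U := by
  rw [nhds_pi, Filter.mem_pi'] at hU
  obtain ⟨F, t, ht, hsub⟩ := hU
  exact ⟨F, fun y hy => hsub fun i hi => (hy i hi).symm ▸ mem_of_mem_nhds (ht i)⟩

theorem exists_finset_forall_eqOn_subset_of_mem_nhds {σ : Type*} {x : σ → ∀ i, H i}
    {U : Set (σ → ∀ i, H i)} (hU : U ∈ 𝓝 x) :
    ∃ F : Finset ι, {y | ∀ s, ∀ i ∈ F, y s i = x s i} ⊆ U := by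
  classical
  rw [nhds_pi, Filter.mem_pi'] at hU
  obtain ⟨I, t, ht, hsub⟩ := hU
  choose F hF using fun s => exists_finset_eqOn_subset_of_mem_nhds_s19 (ht s)
  exact ⟨I.biUnion F, fun y hy => hsub fun s hs =>
    hF s fun i hi => hy s i (Finset.mem_biUnion.2 ⟨s, hs, hi⟩)⟩

theorem dense_of_forall_finset_exists_eqOn {S : Set (∀ i, H i)}
    (hS : ∀ (F : Finset ι) (x : ∀ i, H i), ∃ y ∈ S, ∀ i ∈ F, y i = x i) : Dense S := by
  refine fun x => mem_closure_iff_nhds.2 fun U hU => ?_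
  obtain ⟨F, hF⟩ := exists_finset_eqOn_subset_of_mem_nhds_s19 hU
  obtain ⟨y, hyS, hy⟩ := hS F x
  exact ⟨y, hF hy, hyS⟩

theorem IsRobustlyFree.dense_freeTuples [∀ i, Group (H i)] {σ : Type*} {g : σ → ∀ i, H i}
    (hg : IsRobustlyFree g) : Dense (freeTuples (∀ i, H i) σ) := by
  classical
  refine fun x => mem_closure_iff_nhds.2 fun U hU => ?_
  obtain ⟨F, hF⟩ := exists_finset_forall_eqOn_subset_of_mem_nhds hU
  exact ⟨_, hF fun s i hi => F.piecewise_eq_of_mem _ _ hi,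
    (hg.piecewise (fun _ => F) x).injective_lift⟩

end ProductTopology

section PermCode

variable {ι : Type u}

/-- A code `⟨(m, e), ψ⟩` lets a generator `X ⊆ ι` act on `Fin m` by `ψ` of its trace on `e`. -/
abbrev PermCode (ι : Type u) := Σ p : ℕ × Finset ι, (Set p.2 → Equiv.Perm (Fin p.1))

theorem mk_permCode_le [Infinite ι] : #(PermCode ι) ≤ #ι :=
  calc #(PermCode ι) = sum fun p : ℕ × Finset ι => #(Set p.2 → Equiv.Perm (Fin p.1)) :=
        mk_sigma _
    _ ≤ sum fun _ : ℕ × Finset ι => ℵ₀ := sum_le_sum _ _ fun _ => mk_le_aleph0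
    _ = #ι := by simp [mk_finset_of_infinite]

variable (φ : ι → ℕ) {code : ι → PermCode ι} (hcode : ∀ i, (code i).1.1 ≤ φ i)

noncomputable def codedFamily (X : Set ι) (i : ι) : Equiv.Perm (Fin (φ i)) :=
  Equiv.Perm.viaEmbeddingHom (Fin.castLEEmb (hcode i))
    ((code i).2 (((↑) : (code i).1.2 → ι) ⁻¹' X))

theorem exists_codedFamily_apply_eq {i : ι} {c : PermCode ι} (hi : code i = c) :
    ∃ h : c.1.1 ≤ φ i, ∀ X, codedFamily φ hcode X i =
      Equiv.Perm.viaEmbeddingHom (Fin.castLEEmb h) (c.2 (((↑) : c.1.2 → ι) ⁻¹' X)) := by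
  subst hi
  exact ⟨hcode i, fun _ => rfl⟩

theorem isRobustlyFree_codedFamily (hfib : ∀ c, {i | code i = c}.Infinite) :
    IsRobustlyFree (codedFamily φ hcode) := by
  classical
  intro W hW
  obtain ⟨m, π, hπ⟩ := FreeGroup.exists_perm_lift_ne_one_s19 hW
  obtain ⟨e, he⟩ := ((W.toWord.finite_toSet).image Prod.fst).exists_finset_injOn_preimage_val
  let c : PermCode ι := ⟨(m, e), fun T => π
    (invFunOn (fun X => ((↑) : e → ι) ⁻¹' X) (Prod.fst '' {x | x ∈ W.toWord}) T)⟩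
  refine (hfib c).mono fun i hi => ?_
  obtain ⟨h, hg⟩ := exists_codedFamily_apply_eq φ hcode hi
  have hW : FreeGroup.lift (fun X => codedFamily φ hcode X i) W =
      Equiv.Perm.viaEmbeddingHom (Fin.castLEEmb h) (FreeGroup.lift π W) := by
    rw [MonoidHom.map_freeGroupLift]
    refine FreeGroup.lift_eq_of_forall_mem_toWord fun x hx => ?_
    rw [hg, comp_apply]
    exact congrArg _ (congrArg π (he.leftInvOn_invFunOn ⟨x, hx, rfl⟩))
  exact hW.trans_ne ((map_ne_one_iff _ (Equiv.Perm.viaEmbeddingHom_injective _)).2 hπ)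

theorem exists_isRobustlyFree_perm [Infinite ι] (hφ : ∀ l, #{i // l ≤ φ i} = #ι) :
    ∃ g : Set ι → ∀ i, Equiv.Perm (Fin (φ i)), IsRobustlyFree g := by
  obtain ⟨code, hcode, hfib⟩ := exists_forall_rel_and_infinite_fiber
    (fun (c : PermCode ι) i => c.1.1 ≤ φ i) mk_permCode_le (fun c => hφ c.1.1)
    ⟨(0, ∅), fun _ => 1⟩ fun i => Nat.zero_le (φ i)
  exact ⟨codedFamily φ hcode, isRobustlyFree_codedFamily φ hcode hfib⟩

end PermCode

theorem mk_pi_le_two_power {ι : Type u} [Infinite ι] (H : ι → Type) [∀ i, Countable (H i)] :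
    #(∀ i, H i) ≤ 2 ^ #ι := by
  choose f hf using fun i => Countable.exists_injective_nat (H i)
  calc #(∀ i, H i) ≤ #(ι → ℕ) :=
        mk_le_of_injective fun x y hxy => funext fun i => hf i (congrFun hxy i)
    _ = 2 ^ #ι := by
      rw [mk_arrow, mk_nat, lift_aleph0, lift_uzero]
      exact power_eq_two_power (aleph0_le_mk ι) natCast_lt_aleph0.le (aleph0_le_mk ι)

theorem stmt_19_general (ι : Type u) [Infinite ι] (φ : ι → ℕ)
    (hφ : ∀ l : ℕ, 0 < l → Cardinal.mk {i : ι // l ≤ φ i} = Cardinal.mk ι) :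
    letI : ∀ i, TopologicalSpace (Equiv.Perm (Fin (φ i))) := fun _ => ⊥
    (∃ (σ : Type u) (f : σ → (∀ i, Equiv.Perm (Fin (φ i)))),
      Cardinal.mk σ = 2 ^ Cardinal.mk ι ∧
      Function.Injective (FreeGroup.lift f) ∧
      Dense ((FreeGroup.lift f).range : Set (∀ i, Equiv.Perm (Fin (φ i))))) ∧
    AlmostFree (∀ i, Equiv.Perm (Fin (φ i))) (2 ^ Cardinal.mk ι) := by
  let _ : ∀ i, TopologicalSpace (Equiv.Perm (Fin (φ i))) := fun _ => ⊥
  have hφ₀ : ∀ l, #{i // l ≤ φ i} = #ι := fun l => by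
    rcases Nat.eq_zero_or_pos l with rfl | hl
    · exact mk_congr (Equiv.subtypeUnivEquiv fun i => Nat.zero_le (φ i))
    · exact hφ l hl
  obtain ⟨g₀, hg₀⟩ := exists_isRobustlyFree_perm φ hφ₀
  have hpatterns : #(Finset ι × ∀ i, Equiv.Perm (Fin (φ i))) ≤ #(Set ι) := by
    rw [mk_prod, lift_id, lift_id, mk_finset_of_infinite, mk_set]
    exact mul_le_of_le (aleph0_le_mk ι |>.trans (cantor _).le) (cantor _).le
      (mk_pi_le_two_power _)
  obtain ⟨j⟩ := (le_def _ _).1 hpatterns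
  obtain ⟨g, hg, hgF⟩ := hg₀.exists_forall_finset_exists_eqOn (invFun_surjective j.injective)
  refine ⟨⟨Set ι, g, mk_set, hg.injective_lift, dense_of_forall_finset_exists_eqOn fun F x => ?_⟩,
    fun σ hσ => ?_⟩
  · obtain ⟨X, hX⟩ := hgF F x
    exact ⟨g X, ⟨FreeGroup.of X, FreeGroup.lift_apply_of⟩, hX⟩
  · obtain ⟨e⟩ : Nonempty (σ ≃ Set ι) := Cardinal.eq.1 (hσ.trans mk_set.symm)
    exact (hg₀.comp_injective e.injective).dense_freeTuples

/-- Let `ι` be infinite and `φ : ι → ℕ` take positive values, with `#{i : φ i ≥ l} = #ι`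
for every positive integer `l`. Endow `G = ∏ i, Sym(Fin (φ i))` with the product topology
of the discrete topologies. Then `G` contains a dense free subgroup of rank `2^#ι`;
in particular, `G` is almost `2^#ι`-free. -/
theorem stmt_19 (ι : Type u) [Infinite ι] (φ : ι → ℕ) (hφ1 : ∀ i, 1 ≤ φ i)
    (hφ : ∀ l : ℕ, 0 < l → Cardinal.mk {i : ι // l ≤ φ i} = Cardinal.mk ι) :
    letI : ∀ i, TopologicalSpace (Equiv.Perm (Fin (φ i))) := fun _ => ⊥
    (∃ (σ : Type u) (f : σ → (∀ i, Equiv.Perm (Fin (φ i)))),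
      Cardinal.mk σ = 2 ^ Cardinal.mk ι ∧
      Function.Injective (FreeGroup.lift f) ∧
      Dense ((FreeGroup.lift f).range : Set (∀ i, Equiv.Perm (Fin (φ i))))) ∧
    AlmostFree (∀ i, Equiv.Perm (Fin (φ i))) (2 ^ Cardinal.mk ι) :=
  stmt_19_general ι φ hφ
end
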